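/- arXiv:1811.01603 — 8 statements merged into one kernel-verified Lean document; each statement's English description precedes it below -/
import Mathlib

section
/- Let p ≥ 1 and let A, B be ℂ-linear endomorphisms of ℂ^p. Then the pair (A, B) is semistable — i.e., every pair of linear subspaces V, W ⊆ ℂ^p with A(V) ⊆ W and B(V) ⊆ W satisfies dim W ≥ dim V — if and only if there exists a real number t such that A + tB is invertible. -/
/-!
If `A + t • B` is singular for `p + 1` distinct values `tᵢ`, choose `xᵢ ≠ 0` with
`A xᵢ = -tᵢ • B xᵢ` and put `ψ c = ∑ cᵢ • xᵢ`. Then `V = range ψ` and `W = B(V)` satisfy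
`A(V) ⊆ W`, and `ker ψ ⊆ ker (B ∘ ψ)`. Equality would make the nonzero subspace `ker ψ` invariant
under the diagonal operator `c ↦ t * c` with distinct entries, so it would contain a coordinate
vector `eᵢ`, i.e. `xᵢ = 0`. Hence the inclusion is strict and `dim W < dim V` by rank–nullity.
Conversely, an invertible `A + t • B` maps `V` injectively into `W`.
-/

open Module Submodule LinearMap Finset

section

variable {𝕜 : Type*} [Field 𝕜]

theorem exists_single_mem_of_forall_mul_mem {ι : Type*} [Fintype ι] [DecidableEq ι]
    {t : ι → 𝕜} (ht : Function.Injective t) {K : Submodule 𝕜 (ι → 𝕜)}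
    (hK : ∀ c ∈ K, t * c ∈ K) (hne : K ≠ ⊥) : ∃ i, Pi.single i 1 ∈ K := by
  classical
  suffices ∀ n, ∀ c ∈ K, c ≠ 0 → #{i | c i ≠ 0} ≤ n → ∃ i, Pi.single i 1 ∈ K by
    obtain ⟨c, hc, hc0⟩ := (Submodule.ne_bot_iff K).mp hne
    exact this _ c hc hc0 le_rfl
  intro n
  induction n with
  | zero =>
    intro c _ hc0 hcard
    exact absurd (funext (by simpa using hcard)) hc0
  | succ n ih =>
    intro c hc hc0 hcard
    obtain ⟨j, hj⟩ : ∃ j, c j ≠ 0 := Function.ne_iff.mp hc0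
    -- `t * c - t j • c` kills the `j`-th coordinate of `c`, so it has smaller support
    have hc' : t * c - t j • c ∈ K := K.sub_mem (hK c hc) (K.smul_mem _ hc)
    by_cases h0 : t * c - t j • c = 0
    · have hsingle : (c j)⁻¹ • c = Pi.single j 1 := by
        ext i
        rcases eq_or_ne i j with rfl | hij
        · simp [hj]
        · have : (t i - t j) * c i = 0 := by simpa [sub_mul] using congrFun h0 i
          simpa [hij, hj, sub_ne_zero.mpr (ht.ne hij)] using this
      exact ⟨j, hsingle ▸ K.smul_mem _ hc⟩
    · refine ih _ hc' h0 ?_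
      have hsub : ({i | (t * c - t j • c) i ≠ 0} : Finset ι) ⊆
          ({i | c i ≠ 0} : Finset ι).erase j := by
        intro i hi
        have : (t i - t j) * c i ≠ 0 := by simpa [sub_mul] using (mem_filter.mp hi).2
        simp only [mem_erase, mem_filter, mem_univ, true_and]
        exact ⟨fun hij => by simp [hij] at this, right_ne_zero_of_mul this⟩
      have := card_le_card hsub
      rw [card_erase_of_mem (by simpa using hj)] at this
      omega

variable {E : Type*} [AddCommGroup E] [Module 𝕜 E] [FiniteDimensional 𝕜 E]

theorem finrank_le_of_isUnit_add_smul {A B : Module.End 𝕜 E} {s : 𝕜} (hu : IsUnit (A + s • B))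
    {V W : Submodule 𝕜 E} (hA : V.map A ≤ W) (hB : V.map B ≤ W) :
    finrank 𝕜 V ≤ finrank 𝕜 W := by
  have hinj : Function.Injective (A + s • B) := ((Module.End.isUnit_iff _).mp hu).injective
  have hmap : V.map (A + s • B) ≤ W :=
    (map_add_le _ _ _).trans (sup_le hA ((map_smul_le_map V B s).trans hB))
  calc finrank 𝕜 V = finrank 𝕜 (V.map (A + s • B)) :=
        (Submodule.equivMapOfInjective _ hinj V).finrank_eq
    _ ≤ finrank 𝕜 W := Submodule.finrank_mono hmap

theorem exists_finrank_lt_of_apply_add_smul_eq_zero {ι : Type*} [Fintype ι]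
    (A B : Module.End 𝕜 E) {t : ι → 𝕜} (ht : Function.Injective t) {x : ι → E}
    (hx0 : ∀ i, x i ≠ 0) (hx : ∀ i, A (x i) + t i • B (x i) = 0)
    (hcard : finrank 𝕜 E < Fintype.card ι) :
    ∃ V W : Submodule 𝕜 E, V.map A ≤ W ∧ V.map B ≤ W ∧ finrank 𝕜 W < finrank 𝕜 V := by
  classical
  set ψ := Fintype.linearCombination 𝕜 x
  have hAψ : ∀ c, A (ψ c) = -B (ψ (t * c)) := by
    intro c
    simp [ψ, Fintype.linearCombination_apply, eq_neg_of_add_eq_zero_left (hx _), smul_smul,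
      mul_comm]
  refine ⟨range ψ, (range ψ).map B, ?_, le_rfl, ?_⟩
  · rintro _ ⟨_, ⟨c, rfl⟩, rfl⟩
    rw [hAψ]
    exact neg_mem ⟨_, ⟨t * c, rfl⟩, rfl⟩
  · have hker : ker ψ < ker (B ∘ₗ ψ) := by
      refine lt_of_le_of_ne (ker_le_ker_comp ψ B) fun heq => ?_
      have hinv : ∀ c ∈ ker ψ, t * c ∈ ker ψ := fun c hc => by
        have := hAψ c
        rw [mem_ker.mp hc, map_zero, zero_eq_neg] at this
        rw [heq, mem_ker, comp_apply, this]
      obtain ⟨i, hi⟩ := exists_single_mem_of_forall_mul_mem ht hinv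
        (ker_ne_bot_of_finrank_lt (by simpa using hcard))
      exact hx0 i (by simpa [ψ] using hi)
    have h1 := finrank_range_add_finrank_ker ψ
    have h2 := finrank_range_add_finrank_ker (B ∘ₗ ψ)
    rw [range_comp] at h2
    have := Submodule.finrank_lt_finrank_of_lt hker
    omega

end

theorem semistable_pair_iff_exists_invertible_general (p : ℕ)
    (A B : Module.End ℂ (Fin p → ℂ)) :
    (∀ V W : Submodule ℂ (Fin p → ℂ), V.map A ≤ W → V.map B ≤ W →
      Module.finrank ℂ V ≤ Module.finrank ℂ W) ↔
    ∃ t : ℝ, IsUnit (A + (t : ℂ) • B) := by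
  refine ⟨fun h => ?_, fun ⟨t, hu⟩ V W hA hB => finrank_le_of_isUnit_add_smul hu hA hB⟩
  by_contra! hsing
  have hker (i : Fin (p + 1)) : ∃ x, x ≠ 0 ∧ A x + ((i : ℕ) : ℂ) • B x = 0 := by
    have := hsing (i : ℕ)
    rw [isUnit_iff_ker_eq_bot, ← ne_eq, Submodule.ne_bot_iff] at this
    push_cast at this
    obtain ⟨x, hx, hx0⟩ := this
    exact ⟨x, hx0, hx⟩
  choose x hx0 hx using hker
  obtain ⟨V, W, hA, hB, hlt⟩ := exists_finrank_lt_of_apply_add_smul_eq_zero A B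
    (Nat.cast_injective.comp Fin.val_injective) hx0 hx (by simp)
  exact hlt.not_ge (h V W hA hB)

/-- A pair `(A, B)` of endomorphisms of `ℂ^p` is semistable (every pair of
subspaces `V, W` with `A(V) ⊆ W` and `B(V) ⊆ W` satisfies `dim W ≥ dim V`) if and only if
`A + t B` is invertible for some real `t`. -/
theorem semistable_pair_iff_exists_invertible (p : ℕ) (hp : 1 ≤ p)
    (A B : Module.End ℂ (Fin p → ℂ)) :
    (∀ V W : Submodule ℂ (Fin p → ℂ), V.map A ≤ W → V.map B ≤ W →
      Module.finrank ℂ V ≤ Module.finrank ℂ W) ↔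
    ∃ t : ℝ, IsUnit (A + (t : ℂ) • B) :=
  semistable_pair_iff_exists_invertible_general p A B
end

section
/- Let p ≥ 1 and let A, B be p×p complex matrices. Then the pair (A, B) is semistable if and only if the determinant det(X·A + Y·B), computed over the polynomial ring ℂ[X,Y] in two variables, is a nonzero polynomial. -/
open MvPolynomial

/-- The matrix pencil `X·A + Y·B` with entries in `ℂ[X,Y]`. -/
noncomputable def pencil (p : ℕ) (A B : Matrix (Fin p) (Fin p) ℂ) :
    Matrix (Fin p) (Fin p) (MvPolynomial (Fin 2) ℂ) :=
  Matrix.of fun i j => X 0 * C (A i j) + X 1 * C (B i j)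

set_option maxHeartbeats 1000000 in
/-- A pair `(A, B)` of `p × p` complex matrices is semistable if and only if
`det (X·A + Y·B)` is a nonzero polynomial in `ℂ[X,Y]`. -/
theorem semistable_pair_iff_det_pencil_ne_zero (p : ℕ) (hp : 1 ≤ p)
    (A B : Matrix (Fin p) (Fin p) ℂ) :
    (∀ V W : Submodule ℂ (Fin p → ℂ), V.map A.mulVecLin ≤ W → V.map B.mulVecLin ≤ W →
      Module.finrank ℂ V ≤ Module.finrank ℂ W) ↔
    (pencil p A B).det ≠ 0 := by
  constructor
  · -- semistable → det ≠ 0; contrapositive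
    intro hss hdet
    -- specialize X ↦ 1, Y ↦ t
    set φ : MvPolynomial (Fin 2) ℂ →ₐ[ℂ] Polynomial ℂ := aeval ![1, Polynomial.X] with hφ
    set N : Matrix (Fin p) (Fin p) (Polynomial ℂ) := (pencil p A B).map φ with hN
    have hNdet : N.det = 0 := by
      have h1 := RingHom.map_det (φ : MvPolynomial (Fin 2) ℂ →+* Polynomial ℂ) (pencil p A B)
      rw [hdet, map_zero] at h1
      have h2 : N = ((φ : MvPolynomial (Fin 2) ℂ →+* Polynomial ℂ)).mapMatrix (pencil p A B) :=
        rfl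
      rw [h2, ← h1]
    obtain ⟨v, hv0, hvN⟩ := Matrix.exists_mulVec_eq_zero_iff.mpr hNdet
    -- coefficient vectors
    set c : ℕ → (Fin p → ℂ) := fun m j => (v j).coeff m with hc
    have hNij : ∀ i j, N i j =
        Polynomial.C (A i j) + Polynomial.X * Polynomial.C (B i j) := by
      intro i j
      rw [hN, Matrix.map_apply]
      rw [pencil, Matrix.of_apply]
      rw [map_add, map_mul, map_mul, hφ, aeval_X, aeval_X, aeval_C, aeval_C]
      simp [Polynomial.algebraMap_eq]
    have hA0 : A.mulVec (c 0) = 0 := by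
      funext i
      have h := congrFun hvN i
      have h0 := congrArg (fun q => Polynomial.coeff q 0) h
      simp only [Matrix.mulVec, dotProduct, Polynomial.finset_sum_coeff,
        Polynomial.coeff_zero, Pi.zero_apply] at h0 ⊢
      rw [← h0]
      apply Finset.sum_congr rfl
      intro j _
      rw [hNij i j]
      simp [Polynomial.mul_coeff_zero, hc]
    have hrec : ∀ m, A.mulVec (c (m + 1)) + B.mulVec (c m) = 0 := by
      intro m
      funext i
      have h := congrFun hvN i
      have h0 := congrArg (fun q => Polynomial.coeff q (m + 1)) h
      simp only [Matrix.mulVec, dotProduct, Polynomial.finset_sum_coeff,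
        Polynomial.coeff_zero, Pi.zero_apply, Pi.add_apply] at h0 ⊢
      rw [← h0, ← Finset.sum_add_distrib]
      apply Finset.sum_congr rfl
      intro j _
      rw [hNij i j]
      rw [add_mul, Polynomial.coeff_add, Polynomial.coeff_C_mul, mul_assoc,
        Polynomial.coeff_X_mul, Polynomial.coeff_C_mul]
    -- least index with nonzero coefficient vector
    have hex : ∃ m, c m ≠ 0 := by
      obtain ⟨j, hj⟩ := Function.ne_iff.mp hv0
      have hj' : v j ≠ 0 := by simpa using hj
      have : ∃ m, (v j).coeff m ≠ 0 := by
        by_contra h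
        push_neg at h
        exact hj' (Polynomial.ext fun m => by simp [h m])
      obtain ⟨m, hm⟩ := this
      exact ⟨m, fun h => hm (congrFun h j)⟩
    set k := Nat.find hex with hk
    have hck : c k ≠ 0 := Nat.find_spec hex
    have hAk : A.mulVec (c k) = 0 := by
      rcases Nat.eq_zero_or_pos k with h | h
      · rw [h]; exact hA0
      · have hzero : c (k - 1) = 0 := by
          by_contra hne
          have h2 : k ≤ k - 1 := hk ▸ Nat.find_le hne
          omega
        have h3 := hrec (k - 1)
        rw [hzero, Matrix.mulVec_zero, add_zero, Nat.sub_add_cancel h] at h3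
        exact h3
    set V : Submodule ℂ (Fin p → ℂ) := Submodule.span ℂ (Set.range c) with hV
    set W : Submodule ℂ (Fin p → ℂ) := V.map A.mulVecLin with hW
    have hmemV : ∀ m, c m ∈ V := fun m => Submodule.subset_span ⟨m, rfl⟩
    have hBV : V.map B.mulVecLin ≤ W := by
      rw [hV, Submodule.map_span, Submodule.span_le]
      rintro _ ⟨_, ⟨m, rfl⟩, rfl⟩
      have : B.mulVecLin (c m) = -(A.mulVecLin (c (m + 1))) := by
        have := hrec m
        simp only [Matrix.mulVecLin_apply]
        linear_combination (norm := module) this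
      rw [this]
      exact W.neg_mem ⟨c (m + 1), hmemV (m + 1), rfl⟩
    have hle := hss V W le_rfl hBV
    -- but rank strictly drops
    set g : V →ₗ[ℂ] (Fin p → ℂ) := A.mulVecLin.domRestrict V with hg
    have hrange : LinearMap.range g = W := LinearMap.range_domRestrict _ _
    have hkernt : Nontrivial (LinearMap.ker g) := by
      refine Submodule.nontrivial_iff_ne_bot.mpr fun h => ?_
      have : (⟨c k, hmemV k⟩ : V) ∈ LinearMap.ker g := by
        simp [hg, LinearMap.mem_ker, LinearMap.domRestrict_apply, hAk]
      rw [h, Submodule.mem_bot] at this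
      exact hck (by simpa using congrArg Subtype.val this)
    have hker : 0 < Module.finrank ℂ (LinearMap.ker g) :=
      Module.finrank_pos_iff.mpr hkernt
    have hrn := LinearMap.finrank_range_add_finrank_ker g
    have hWr : Module.finrank ℂ W = Module.finrank ℂ (LinearMap.range g) := by
      rw [hrange]
    omega
  · -- det ≠ 0 → semistable
    intro hdet V W hAW hBW
    have hex : ∃ x : Fin 2 → ℂ, eval x ((pencil p A B).det) ≠ 0 := by
      by_contra h
      push_neg at h
      exact hdet (MvPolynomial.funext fun x => by simp [h x])
    obtain ⟨x, hx⟩ := hex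
    set M : Matrix (Fin p) (Fin p) ℂ := x 0 • A + x 1 • B with hM
    have hMdet : M.det ≠ 0 := by
      have h1 := RingHom.map_det (eval x) (pencil p A B)
      have h2 : (eval x : MvPolynomial (Fin 2) ℂ →+* ℂ).mapMatrix (pencil p A B) = M := by
        rw [hM]
        ext i j
        rw [RingHom.mapMatrix_apply, Matrix.map_apply]
        simp [pencil, Matrix.add_apply, smul_eq_mul]
      rw [h1, h2] at hx
      exact hx
    have hinj : Function.Injective M.mulVecLin := by
      have : Function.Injective M.mulVec :=
        Matrix.mulVec_injective_iff_isUnit.mpr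
          ((Matrix.isUnit_iff_isUnit_det M).mpr (isUnit_iff_ne_zero.mpr hMdet))
      intro a b hab
      exact this (by simpa [Matrix.mulVecLin_apply] using hab)
    have hmap : V.map M.mulVecLin ≤ W := by
      rintro _ ⟨v, hv, rfl⟩
      have hv' : M.mulVecLin v = x 0 • A.mulVecLin v + x 1 • B.mulVecLin v := by
        rw [Matrix.mulVecLin_apply, Matrix.mulVecLin_apply, Matrix.mulVecLin_apply, hM,
          Matrix.add_mulVec, Matrix.smul_mulVec, Matrix.smul_mulVec]
      rw [hv']
      exact W.add_mem (W.smul_mem _ (hAW ⟨v, hv, rfl⟩)) (W.smul_mem _ (hBW ⟨v, hv, rfl⟩))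
    calc Module.finrank ℂ V
        = Module.finrank ℂ (V.map M.mulVecLin) :=
          (Submodule.equivMapOfInjective _ hinj V).finrank_eq
      _ ≤ Module.finrank ℂ W := Submodule.finrank_mono hmap
end

section
/- Let p ≥ 1 and let P ∈ ℂ[X,Y] be a nonzero homogeneous polynomial of degree p in two variables. Then there exist p×p complex matrices A and B such that det(X·A + Y·B) = P in ℂ[X,Y]; moreover any such pair (A, B) is semistable. -/
open MvPolynomial

set_option maxHeartbeats 1000000

lemma degsum {P : MvPolynomial (Fin 2) ℂ} {p : ℕ} (hhom : P.IsHomogeneous p)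
    {d : Fin 2 →₀ ℕ} (hd : coeff d P ≠ 0) : d 0 + d 1 = p := by
  have h := hhom hd
  rw [Finsupp.weight_apply] at h
  simp only [Pi.one_apply, smul_eq_mul, mul_one] at h
  rw [← h, Finsupp.sum_fintype _ _ (fun _ => rfl)]
  exact (Fin.sum_univ_two d).symm

noncomputable def deho (P : MvPolynomial (Fin 2) ℂ) : Polynomial ℂ :=
  ∑ d ∈ P.support, Polynomial.C (coeff d P) * Polynomial.X ^ (d 0)

lemma eval_eq_pow_mul {P : MvPolynomial (Fin 2) ℂ} {p : ℕ} (hhom : P.IsHomogeneous p)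
    (g : Fin 2 → ℂ) (hg : g 1 ≠ 0) :
    eval g P = g 1 ^ p * (deho P).eval (g 0 / g 1) := by
  rw [eval_eq']
  rw [show (deho P).eval (g 0 / g 1) = ∑ d ∈ P.support, coeff d P * (g 0 / g 1) ^ (d 0) by
    simp [deho, Polynomial.eval_finset_sum]]
  rw [Finset.mul_sum]
  apply Finset.sum_congr rfl
  intro d hd
  have h := degsum hhom (mem_support_iff.mp hd)
  rw [Fin.prod_univ_two, div_pow, show p = d 0 + d 1 from h.symm, pow_add]
  field_simp

lemma mv_eq_of_eval_eq (P Q : MvPolynomial (Fin 2) ℂ)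
    (h : ∀ g : Fin 2 → ℂ, g 1 ≠ 0 → eval g P = eval g Q) : P = Q := by
  have h2 : X 1 * P = X 1 * Q := by
    apply MvPolynomial.funext
    intro g
    rcases eq_or_ne (g 1) 0 with h0 | h0
    · simp [h0]
    · simp [h g h0]
  exact mul_left_cancel₀ (X_ne_zero 1) h2

lemma deho_natDegree_le {P : MvPolynomial (Fin 2) ℂ} {p : ℕ} (hhom : P.IsHomogeneous p) :
    (deho P).natDegree ≤ p := by
  apply Polynomial.natDegree_sum_le_of_forall_le
  intro d hd
  refine (Polynomial.natDegree_C_mul_X_pow_le _ _).trans ?_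
  have h := degsum hhom (mem_support_iff.mp hd)
  omega

lemma exists_linear_factorization (p : ℕ) (hp : 1 ≤ p) (P : MvPolynomial (Fin 2) ℂ)
    (hP : P ≠ 0) (hhom : P.IsHomogeneous p) :
    ∃ a b : Fin p → ℂ, P = ∏ i : Fin p, (C (a i) * X 0 + C (b i) * X 1) := by
  set q := deho P with hq_def
  have hqdeg : q.natDegree ≤ p := deho_natDegree_le hhom
  have hq0 : q ≠ 0 := by
    intro h
    apply hP
    apply mv_eq_of_eval_eq P 0
    intro g hg
    rw [map_zero, eval_eq_pow_mul hhom g hg, ← hq_def, h, Polynomial.eval_zero, mul_zero]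
  set m := q.natDegree with hm_def
  have hcard : Multiset.card q.roots = m :=
    Polynomial.splits_iff_card_roots.mp (IsAlgClosed.splits q)
  set c := q.leadingCoeff with hc_def
  have hcne : c ≠ 0 := Polynomial.leadingCoeff_ne_zero.mpr hq0
  have hfact := Polynomial.C_leadingCoeff_mul_prod_multiset_X_sub_C hcard
  set L := q.roots.toList with hL_def
  have hL : L.length = m := by rw [hL_def, Multiset.length_toList, hcard]
  set rt : ℕ → ℂ := fun n => if h : n < m then L.get ⟨n, by omega⟩ else 0 with hrt
  have hq_eval : ∀ t : ℂ, q.eval t = c * ∏ i ∈ Finset.range m, (t - rt i) := by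
    intro t
    conv_lhs => rw [← hfact]
    rw [Polynomial.eval_mul, Polynomial.eval_C, Polynomial.eval_multiset_prod]
    congr 1
    rw [Multiset.map_map]
    have hroots : q.roots = (L : Multiset ℂ) := (Multiset.coe_toList _).symm
    rw [hroots, Multiset.map_coe, Multiset.prod_coe]
    have : ∀ (f : ℂ → ℂ), ((L.map f).prod) = ∏ i : Fin L.length, f L[i] := by
      intro f
      conv_lhs => rw [← List.ofFn_getElem (xs := L), List.map_ofFn, List.prod_ofFn]
      rfl
    rw [this, show (Finset.range m) = Finset.range L.length by rw [hL],
      ← Fin.prod_univ_eq_prod_range (fun n => t - rt n) L.length]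
    apply Finset.prod_congr rfl
    intro i _
    have hi' : (i : ℕ) < m := by rw [← hL]; exact i.isLt
    simp [hrt, dif_pos hi', Polynomial.eval_sub]
  refine ⟨fun i => if (i:ℕ) < m then (if (i:ℕ) = 0 then c else 1) else 0,
          fun i => if (i:ℕ) < m then (if (i:ℕ) = 0 then c else 1) * (-(rt i))
                   else (if (i:ℕ) = 0 then c else 1), ?_⟩
  apply mv_eq_of_eval_eq
  intro g hg
  set x := g 0 with hx
  set y := g 1 with hy
  rw [eval_eq_pow_mul hhom g hg, ← hq_def, hq_eval, map_prod]
  have hfac : ∀ i : Fin p,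
      eval g (C (if (i:ℕ) < m then (if (i:ℕ) = 0 then c else 1) else 0) * X 0 +
        C (if (i:ℕ) < m then (if (i:ℕ) = 0 then c else 1) * (-(rt i))
           else (if (i:ℕ) = 0 then c else 1)) * X 1) =
      (if (i:ℕ) = 0 then c else 1) * (if (i:ℕ) < m then x - rt i * y else y) := by
    intro i
    simp only [map_add, map_mul, eval_C, eval_X, ← hx, ← hy]
    split_ifs <;> ring
  rw [Finset.prod_congr rfl (fun i _ => hfac i), Finset.prod_mul_distrib]
  have hscf : (∏ i : Fin p, (if (i:ℕ) = 0 then c else 1)) = c := by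
    rw [Fin.prod_univ_eq_prod_range (fun n => if n = 0 then c else 1) p,
      Finset.prod_ite_eq' (Finset.range p) 0 (fun _ => c), if_pos (Finset.mem_range.mpr hp)]
  rw [hscf]
  have hmain : (∏ i : Fin p, (if (i:ℕ) < m then x - rt i * y else y)) =
      (∏ i ∈ Finset.range m, (x - rt i * y)) * y ^ (p - m) := by
    rw [Fin.prod_univ_eq_prod_range (fun n => if n < m then x - rt n * y else y) p,
      ← Finset.prod_range_mul_prod_Ico _ hqdeg]
    congr 1
    · exact Finset.prod_congr rfl fun i hi => if_pos (Finset.mem_range.mp hi)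
    · rw [Finset.prod_congr rfl (fun i hi => if_neg (by
        have := (Finset.mem_Ico.mp hi).1; omega)), Finset.prod_const, Nat.card_Ico]
  rw [hmain]
  have hym : y ^ m * ∏ i ∈ Finset.range m, (x / y - rt i) =
      ∏ i ∈ Finset.range m, (x - rt i * y) := by
    have h1 : ∏ i ∈ Finset.range m, (x - rt i * y) =
        ∏ i ∈ Finset.range m, (y * (x / y - rt i)) := by
      apply Finset.prod_congr rfl
      intro i _
      field_simp
    rw [h1, Finset.prod_mul_distrib, Finset.prod_const, Finset.card_range]
  have hyp : y ^ m * y ^ (p - m) = y ^ p := by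
    rw [← pow_add]; congr 1; omega
  calc y ^ p * (c * ∏ i ∈ Finset.range m, (x / y - rt i))
      = c * ((y ^ m * ∏ i ∈ Finset.range m, (x / y - rt i)) * y ^ (p - m)) := by
        rw [← hyp]; ring
    _ = c * ((∏ i ∈ Finset.range m, (x - rt i * y)) * y ^ (p - m)) := by rw [hym]

lemma semistable_of_det (p : ℕ) (A B : Matrix (Fin p) (Fin p) ℂ)
    (P : MvPolynomial (Fin 2) ℂ) (hP : P ≠ 0) (hdet : (pencil p A B).det = P)
    (V W : Submodule ℂ (Fin p → ℂ)) (hA : V.map A.mulVecLin ≤ W) (hB : V.map B.mulVecLin ≤ W) :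
    Module.finrank ℂ V ≤ Module.finrank ℂ W := by
  by_contra hlt
  push_neg at hlt
  set d := Module.finrank ℂ V with hd
  set e := Module.finrank ℂ W with he
  let bV : Module.Basis (Fin d) ℂ V := Module.finBasis ℂ V
  let bW : Module.Basis (Fin e) ℂ W := Module.finBasis ℂ W
  set Sm : Matrix (Fin p) (Fin d) ℂ := Matrix.of fun i j => ((bV j : Fin p → ℂ)) i with hSm_def
  set Tm : Matrix (Fin p) (Fin e) ℂ := Matrix.of fun i k => ((bW k : Fin p → ℂ)) i with hTm_def
  have hSm : ∀ u : Fin d → ℂ, Sm.mulVec u = ((∑ j, u j • bV j : V) : Fin p → ℂ) := by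
    intro u; ext i
    simp [Matrix.mulVec, dotProduct, hSm_def, Submodule.coe_sum, mul_comm]
  have hTm : ∀ u : Fin e → ℂ, Tm.mulVec u = ((∑ k, u k • bW k : W) : Fin p → ℂ) := by
    intro u; ext i
    simp [Matrix.mulVec, dotProduct, hTm_def, Submodule.coe_sum, mul_comm]
  have hWrep : ∀ w : Fin p → ℂ, w ∈ W → ∃ u : Fin e → ℂ, w = Tm.mulVec u := by
    intro w hw
    refine ⟨bW.repr ⟨w, hw⟩, ?_⟩
    rw [hTm]
    have := bW.sum_repr ⟨w, hw⟩
    rw [this]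
  have hcolA : ∀ j : Fin d, ∃ u, A.mulVec (bV j : Fin p → ℂ) = Tm.mulVec u := by
    intro j
    apply hWrep
    apply hA
    exact ⟨(bV j : Fin p → ℂ), (bV j).2, rfl⟩
  have hcolB : ∀ j : Fin d, ∃ u, B.mulVec (bV j : Fin p → ℂ) = Tm.mulVec u := by
    intro j
    apply hWrep
    apply hB
    exact ⟨(bV j : Fin p → ℂ), (bV j).2, rfl⟩
  choose uA huA using hcolA
  choose uB huB using hcolB
  set UA : Matrix (Fin e) (Fin d) ℂ := Matrix.of fun k j => uA j k with hUA_def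
  set UB : Matrix (Fin e) (Fin d) ℂ := Matrix.of fun k j => uB j k with hUB_def
  have hUA : Tm * UA = A * Sm := by
    ext i j
    rw [Matrix.mul_apply, Matrix.mul_apply]
    have := congrFun (huA j) i
    simp only [Matrix.mulVec, dotProduct, hSm_def, hTm_def, hUA_def, Matrix.of_apply] at this ⊢
    rw [← this]
  have hUB : Tm * UB = B * Sm := by
    ext i j
    rw [Matrix.mul_apply, Matrix.mul_apply]
    have := congrFun (huB j) i
    simp only [Matrix.mulVec, dotProduct, hSm_def, hTm_def, hUB_def, Matrix.of_apply] at this ⊢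
    rw [← this]
  -- move to fraction field
  set R := MvPolynomial (Fin 2) ℂ
  let K := FractionRing R
  let φ : R →+* K := algebraMap R K
  let ψ : ℂ →+* K := φ.comp (C : ℂ →+* R)
  set xK := φ (X 0) with hxK
  set yK := φ (X 1) with hyK
  set MK : Matrix (Fin p) (Fin p) K := (pencil p A B).map φ with hMK
  set NK : Matrix (Fin e) (Fin d) K :=
    Matrix.of (fun k j => xK * ψ (UA k j) + yK * ψ (UB k j)) with hNK
  have hpsi : ∀ a : ℂ, ψ a = φ (C a) := fun a => rfl
  have key : MK * Sm.map ψ = Tm.map ψ * NK := by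
    ext i j
    rw [Matrix.mul_apply, Matrix.mul_apply]
    have lhs : ∑ k, (MK i k) * (Sm.map ψ) k j = xK * ψ ((A * Sm) i j) + yK * ψ ((B * Sm) i j) := by
      simp only [hMK, pencil, Matrix.map_apply, Matrix.of_apply, Matrix.mul_apply, map_sum,
        map_add, map_mul, RingHom.comp_apply]
      rw [Finset.mul_sum, Finset.mul_sum, ← Finset.sum_add_distrib]
      apply Finset.sum_congr rfl
      intro k _
      simp only [hpsi, hxK, hyK]
      ring
    have rhs : ∑ k, (Tm.map ψ) i k * NK k j = xK * ψ ((Tm * UA) i j) + yK * ψ ((Tm * UB) i j) := by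
      simp only [hNK, Matrix.map_apply, Matrix.of_apply, Matrix.mul_apply, map_sum, map_mul]
      rw [Finset.mul_sum, Finset.mul_sum, ← Finset.sum_add_distrib]
      apply Finset.sum_congr rfl
      intro k _
      ring
    rw [lhs, rhs, hUA, hUB]
  -- kernel vector of NK
  have hrange : Module.finrank K (LinearMap.range NK.mulVecLin) ≤ e :=
    (Submodule.finrank_le _).trans_eq (Module.finrank_fin_fun K)
  have hrk := LinearMap.finrank_range_add_finrank_ker NK.mulVecLin
  rw [Module.finrank_fin_fun K] at hrk
  have hkerpos : 0 < Module.finrank K (LinearMap.ker NK.mulVecLin) := by omega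
  have hne : LinearMap.ker NK.mulVecLin ≠ ⊥ := by
    intro h
    rw [h, finrank_bot] at hkerpos
    omega
  obtain ⟨v, hv_mem, hv0⟩ := (Submodule.ne_bot_iff _).mp hne
  have hv : NK.mulVec v = 0 := hv_mem
  -- w := Sm_K v ≠ 0
  set w : Fin p → K := (Sm.map ψ).mulVec v with hw_def
  have hMw : MK.mulVec w = 0 := by
    rw [hw_def, Matrix.mulVec_mulVec, key, ← Matrix.mulVec_mulVec, hv, Matrix.mulVec_zero]
  -- left inverse of Sm
  have hker0 : LinearMap.ker (Matrix.toLin' Sm) = ⊥ := by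
    rw [LinearMap.ker_eq_bot']
    intro u hu
    rw [Matrix.toLin'_apply, hSm] at hu
    have : (∑ j, u j • bV j : V) = 0 := by
      apply Subtype.ext
      exact hu
    funext j
    exact Fintype.linearIndependent_iff.mp bV.linearIndependent u this j
  obtain ⟨g, hg⟩ := (Matrix.toLin' Sm).exists_leftInverse_of_injective hker0
  set Lm : Matrix (Fin d) (Fin p) ℂ := LinearMap.toMatrix' g with hLm
  have hLS : Lm * Sm = 1 := by
    rw [hLm, ← LinearMap.toMatrix'_toLin' Sm, ← LinearMap.toMatrix'_comp, hg,
      LinearMap.toMatrix'_id]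
  have hLSK : (Lm.map ψ) * (Sm.map ψ) = 1 := by
    rw [← Matrix.map_mul, hLS, Matrix.map_one ψ (map_zero ψ) (map_one ψ)]
  have hw0 : w ≠ 0 := by
    intro h
    apply hv0
    have : ((Lm.map ψ) * (Sm.map ψ)).mulVec v = 0 := by
      rw [← Matrix.mulVec_mulVec, ← hw_def, h, Matrix.mulVec_zero]
    rwa [hLSK, Matrix.one_mulVec] at this
  -- conclude det = 0
  have hdet0 : MK.det = 0 := Matrix.exists_mulVec_eq_zero_iff.mp ⟨w, hw0, hMw⟩
  have hz : φ ((pencil p A B).det) = 0 := by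
    rw [RingHom.map_det]
    exact hdet0
  rw [hdet] at hz
  exact hP ((map_eq_zero_iff φ (IsFractionRing.injective R K)).mp hz)

/-- Every nonzero homogeneous polynomial `P ∈ ℂ[X,Y]` of degree `p` arises as
`det (X·A + Y·B)` for some `p × p` complex matrices `A, B`; moreover every pair `(A, B)` with
`det (X·A + Y·B) = P` is semistable. -/
theorem exists_pencil_det_eq_and_semistable (p : ℕ) (hp : 1 ≤ p)
    (P : MvPolynomial (Fin 2) ℂ) (hP : P ≠ 0) (hhom : P.IsHomogeneous p) :
    (∃ A B : Matrix (Fin p) (Fin p) ℂ, (pencil p A B).det = P) ∧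
    (∀ A B : Matrix (Fin p) (Fin p) ℂ, (pencil p A B).det = P →
      ∀ V W : Submodule ℂ (Fin p → ℂ), V.map A.mulVecLin ≤ W → V.map B.mulVecLin ≤ W →
        Module.finrank ℂ V ≤ Module.finrank ℂ W) := by
  constructor
  · obtain ⟨a, b, hab⟩ := exists_linear_factorization p hp P hP hhom
    refine ⟨Matrix.diagonal a, Matrix.diagonal b, ?_⟩
    have hdg : pencil p (Matrix.diagonal a) (Matrix.diagonal b) =
        Matrix.diagonal (fun i => X 0 * C (a i) + X 1 * C (b i)) := by
      ext i j
      rcases eq_or_ne i j with h | h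
      · subst h; simp [pencil, Matrix.diagonal]
      · simp [pencil, Matrix.diagonal_apply_ne _ h, h]
    rw [hdg, Matrix.det_diagonal, hab]
    apply Finset.prod_congr rfl
    intro i _
    ring
  · intro A B hdet V W hA hB
    exact semistable_of_det p A B P hP hdet V W hA hB
end

section
/- Let p, q, r be positive integers with p·q·r > p² + q² (equivalently p/q + q/p < r). Then there exists a stable r-tuple of ℂ-linear maps from ℂ^p to ℂ^q. -/
open Module Set

namespace KroneckerAux

/-! ### Arithmetic lemma (codimension count) -/

lemma arithZ (p q r u v x y : ℤ) (hx : 1 ≤ x) (hy : 0 ≤ y) (hu : 1 ≤ u) (hv : 0 ≤ v)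
    (hp : p = u + x) (hq : q = v + y) (hh : p ^ 2 + q ^ 2 + 1 ≤ p * q * r)
    (hs : p * v ≤ q * u) :
    x * u + y * v + r * v * u + r * q * x + 1 ≤ r * q * p := by
  have hp1 : 1 ≤ p := by omega
  have hq0 : 0 ≤ q := by omega
  have hq1 : 1 ≤ q := by
    rcases lt_or_ge q 1 with h' | h'
    · have hq00 : q = 0 := by omega
      rw [hq00] at hh
      nlinarith [sq_nonneg p]
    · exact h'
  have hqpr : q < p * r := by
    by_contra hc
    push_neg at hc
    have h2 : p * q * r ≤ q * q := by
      calc p * q * r = q * (p * r) := by ring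
      _ ≤ q * q := by exact mul_le_mul_of_nonneg_left hc hq0
    nlinarith [sq_nonneg p]
  have hupq : q * u ≤ q * p := by
    have : u ≤ p := by omega
    exact mul_le_mul_of_nonneg_left this hq0
  have hqupru : q * u < p * r * u := by
    have := mul_lt_mul_of_pos_right hqpr (by omega : (0:ℤ) < u)
    linarith [this]
  have hfac2 : 0 ≤ p * q + p * r * u - q * u - p * v := by linarith
  have hB : 0 ≤ q * u - p * v := by linarith
  have hA : 1 ≤ u * x * (p * q * r - p ^ 2 - q ^ 2) := by
    have h3 : 1 ≤ p * q * r - p ^ 2 - q ^ 2 := by linarith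
    have h4 : (1:ℤ) ≤ u * x := by nlinarith
    nlinarith
  have key : p ^ 2 * (r * q * u - (x * u + y * v + r * v * u)) =
      u * x * (p * q * r - p ^ 2 - q ^ 2) +
        (q * u - p * v) * (p * q + p * r * u - q * u - p * v) := by
    subst hp; subst hq; ring
  have hBC : 0 ≤ (q * u - p * v) * (p * q + p * r * u - q * u - p * v) :=
    mul_nonneg hB hfac2
  have hPG : 1 ≤ p ^ 2 * (r * q * u - (x * u + y * v + r * v * u)) := by
    rw [key]; linarith
  have hG : 1 ≤ r * q * u - (x * u + y * v + r * v * u) := by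
    by_contra hc
    push_neg at hc
    have hG0 : r * q * u - (x * u + y * v + r * v * u) ≤ 0 := by linarith
    have : p ^ 2 * (r * q * u - (x * u + y * v + r * v * u)) ≤ 0 :=
      mul_nonpos_of_nonneg_of_nonpos (sq_nonneg p) hG0
    linarith
  have : r * q * p = r * q * u + r * q * x := by rw [hp]; ring
  omega

lemma arith (p q r u v : ℕ) (h : p ^ 2 + q ^ 2 < p * q * r)
    (hp : 0 < p) (hq : 0 < q)
    (hu1 : 1 ≤ u) (hup : u ≤ p) (hvq : v ≤ q) (hslope : p * v ≤ q * u)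
    (hne : ¬(u = p ∧ v = q)) :
    (p - u) * u + ((q - v) * v + (r * (v * u) + r * (q * (p - u)))) < r * (q * p) := by
  obtain ⟨x, hx⟩ : ∃ x, p = u + x := ⟨p - u, by omega⟩
  obtain ⟨y, hy⟩ : ∃ y, q = v + y := ⟨q - v, by omega⟩
  have hxx : p - u = x := by omega
  have hyy : q - v = y := by omega
  rcases Nat.eq_zero_or_pos x with hx0 | hx0
  · -- u = p
    have hupeq : u = p := by omega
    have hy0 : 0 < y := by omega
    have hqpr : q < p * r := by
      have h2 : q * q < q * (p * r) := by nlinarith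
      exact Nat.lt_of_mul_lt_mul_left h2
    have hv : v < r * u := by
      calc v < q := by omega
      _ < p * r := hqpr
      _ = r * u := by rw [hupeq]; ring
    have hyv : y * v < y * (r * u) := Nat.mul_lt_mul_of_le_of_lt (le_refl y) hv hy0
    have hgoal : r * (q * p) = r * (v * u) + y * (r * u) := by
      rw [hupeq, hy]; ring
    rw [hxx, hyy, hx0]
    rw [hgoal]
    omega
  · -- u < p
    rw [hxx, hyy]
    zify
    have hZ := arithZ (p : ℤ) (q : ℤ) (r : ℤ) (u : ℤ) (v : ℤ) (x : ℤ) (y : ℤ)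
      (by exact_mod_cast hx0) (by positivity) (by exact_mod_cast hu1) (by positivity)
      (by exact_mod_cast hx) (by exact_mod_cast hy)
      (by exact_mod_cast Nat.succ_le_of_lt h) (by exact_mod_cast hslope)
    nlinarith [hZ]

end KroneckerAux

namespace KroneckerAux

/-! ### Avoidance lemma: finitely many smooth images from lower-dimensional spaces
cannot cover a finite-dimensional space. -/

lemma avoid {F : Type} [NormedAddCommGroup F] [NormedSpace ℝ F] [FiniteDimensional ℝ F]
    (hpos : 0 < finrank ℝ F)
    {ι : Type} [Finite ι] (E : ι → Type)
    [∀ i, NormedAddCommGroup (E i)] [∀ i, NormedSpace ℝ (E i)]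
    [∀ i, FiniteDimensional ℝ (E i)]
    (f : ∀ i, E i → F) (hf : ∀ i, ContDiff ℝ 1 (f i))
    (hdim : ∀ i, finrank ℝ (E i) < finrank ℝ F) :
    ∃ y : F, ∀ i x, f i x ≠ y := by
  have hcount : Countable ι := Finite.to_countable
  have hd : dimH (⋃ i, Set.range (f i)) ≤ ((finrank ℝ F - 1 : ℕ) : ENNReal) := by
    rw [dimH_iUnion]
    refine iSup_le fun i => le_trans (hf i).dimH_range_le ?_
    exact_mod_cast Nat.le_sub_one_of_lt (hdim i)
  have hlt : dimH (⋃ i, Set.range (f i)) < (finrank ℝ F : ENNReal) := by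
    refine lt_of_le_of_lt hd ?_
    exact_mod_cast Nat.sub_lt hpos Nat.one_pos
  have hdense : Dense (⋃ i, Set.range (f i))ᶜ := dense_compl_of_dimH_lt_finrank hlt
  obtain ⟨y, hy⟩ := hdense.nonempty
  exact ⟨y, fun i x hx => hy (Set.mem_iUnion.2 ⟨i, ⟨x, hx⟩⟩)⟩

end KroneckerAux

namespace KroneckerAux

open Submodule in
set_option maxHeartbeats 2000000 in
/-- Every `u`-dimensional subspace of `ℂⁿ` has an "echelon" family: `u` vectors in `W`
whose values on a suitable set of `u` pivot coordinates form the identity, and which span `W`. -/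
lemma exists_echelon {n u : ℕ} (W : Submodule ℂ (Fin n → ℂ)) (hW : finrank ℂ W = u) :
    ∃ (σ : (Fin u ⊕ Fin (n - u)) ≃ Fin n) (b : Fin u → Fin n → ℂ),
      (∀ k, b k ∈ W) ∧
      (∀ k k', b k (σ (Sum.inl k')) = if k' = k then 1 else 0) ∧
      (W ≤ Submodule.span ℂ (Set.range b)) := by
  classical
  let w : Basis (Fin u) ℂ W := Module.finBasisOfFinrankEq ℂ W hW
  set rows : Fin n → (Fin u → ℂ) := fun i k => (w k : Fin n → ℂ) i with hrows
  -- the rows span the full space `Fin u → ℂ`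
  have hspan : Submodule.span ℂ (Set.range rows) = ⊤ := by
    by_contra hne
    obtain ⟨φ, hφne, hφ⟩ := Submodule.exists_dual_map_eq_bot_of_lt_top
      (lt_top_iff_ne_top.2 hne) inferInstance
    have hval : ∀ i, φ (rows i) = 0 := by
      intro i
      have : φ (rows i) ∈ (Submodule.span ℂ (Set.range rows)).map φ :=
        ⟨rows i, Submodule.subset_span ⟨i, rfl⟩, rfl⟩
      rw [hφ] at this
      simpa using this
    set c : Fin u → ℂ := fun k => φ (fun j => if k = j then (1:ℂ) else 0) with hc
    have hφz : ∀ z : Fin u → ℂ, φ z = ∑ k, z k * c k := by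
      intro z
      conv_lhs => rw [pi_eq_sum_univ z]
      rw [map_sum]
      refine Finset.sum_congr rfl fun k _ => ?_
      rw [map_smul, smul_eq_mul, hc]
    have hsum0 : (∑ k, c k • w k) = 0 := by
      have hcoe : ((∑ k, c k • w k : W) : Fin n → ℂ) = ∑ k, c k • ((w k : Fin n → ℂ)) := by
        simp only [AddSubmonoidClass.coe_finset_sum, SetLike.val_smul]
      have hcoord : ∀ i, ((∑ k, c k • w k : W) : Fin n → ℂ) i = 0 := by
        intro i
        have h5 := hval i
        rw [hφz] at h5
        rw [hcoe]
        simp only [Finset.sum_apply, Pi.smul_apply, smul_eq_mul]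
        rw [← h5]
        exact Finset.sum_congr rfl fun k _ => by rw [hrows]; ring
      have h6 : ((∑ k, c k • w k : W) : Fin n → ℂ) = 0 := funext hcoord
      exact Subtype.ext (by simpa using h6)
    have hc0 : ∀ k, c k = 0 := by
      exact Fintype.linearIndependent_iff.1 w.linearIndependent c hsum0
    apply hφne
    apply LinearMap.ext
    intro z
    rw [hφz]
    simp [hc0]
  -- select `u` linearly independent rows
  obtain ⟨t, hts, hspan_t, hindep⟩ := exists_linearIndependent ℂ (Set.range rows)
  rw [hspan] at hspan_t
  have htfin : t.Finite := hindep.setFinite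
  haveI : Fintype t := htfin.fintype
  have hcard : Fintype.card t = u := by
    have h1 : finrank ℂ (Submodule.span ℂ t) = t.toFinset.card :=
      finrank_span_set_eq_card hindep
    rw [hspan_t, finrank_top] at h1
    have h2 : finrank ℂ (Fin u → ℂ) = u := by
      simp [Module.finrank_fintype_fun_eq_card]
    rw [h2] at h1
    rw [Set.toFinset_card] at h1
    omega
  have hchoice : ∀ z : t, ∃ i, rows i = (z : Fin u → ℂ) := fun z => hts z.2
  choose g hg using hchoice
  let e : Fin u ≃ t := (Fintype.equivFinOfCardEq hcard).symm
  set ρ : Fin u → Fin n := fun k => g (e k) with hρ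
  have hρrows : ∀ k, rows (ρ k) = ((e k : t) : Fin u → ℂ) := fun k => hg (e k)
  have hv'indep : LinearIndependent ℂ (fun k => rows (ρ k)) := by
    have : (fun k => rows (ρ k)) = (fun (z : t) => (z : Fin u → ℂ)) ∘ e := by
      funext k; exact hρrows k
    rw [this]
    exact hindep.comp e e.injective
  have hρinj : Function.Injective ρ := by
    intro k1 k2 hk
    have : rows (ρ k1) = rows (ρ k2) := by rw [hk]
    rw [hρrows, hρrows] at this
    exact e.injective (Subtype.coe_injective this)
  have hv'span : Submodule.span ℂ (Set.range fun k => rows (ρ k)) = ⊤ := by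
    have : (Set.range fun k => rows (ρ k)) = t := by
      ext z
      constructor
      · rintro ⟨k, rfl⟩
        rw [show (fun k => rows (ρ k)) k = rows (ρ k) from rfl, hρrows k]
        exact (e k).2
      · intro hz
        refine ⟨e.symm ⟨z, hz⟩, ?_⟩
        rw [show (fun k => rows (ρ k)) (e.symm ⟨z, hz⟩) = rows (ρ (e.symm ⟨z, hz⟩)) from rfl,
          hρrows, Equiv.apply_symm_apply]
    rw [this, hspan_t]
  -- the square "pivot evaluation" map is bijective
  let T : (Fin u → ℂ) →ₗ[ℂ] (Fin n → ℂ) :=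
    Fintype.linearCombination ℂ (fun k => ((w k : Fin n → ℂ)))
  let L : (Fin n → ℂ) →ₗ[ℂ] (Fin u → ℂ) := LinearMap.funLeft ℂ ℂ ρ
  have hT_apply : ∀ c, T c = ∑ k, c k • (w k : Fin n → ℂ) := fun c =>
    Fintype.linearCombination_apply ℂ (fun k => ((w k : Fin n → ℂ))) c
  have hLw_inj : Function.Injective (L.comp T) := by
    rw [← LinearMap.ker_eq_bot]
    rw [Submodule.eq_bot_iff]
    intro c hcker
    have hck : ∀ k₀, ∑ k, c k * rows (ρ k₀) k = 0 := by
      intro k₀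
      have : (L (T c)) k₀ = 0 := by
        rw [LinearMap.mem_ker] at hcker
        rw [show L (T c) = (L.comp T) c from rfl, hcker]; rfl
      rw [hT_apply] at this
      simp only [L, LinearMap.funLeft_apply, Finset.sum_apply, Pi.smul_apply,
        smul_eq_mul] at this
      simpa [hrows, mul_comm] using this
    -- the functional `z ↦ ∑ c k * z k` kills a spanning set, hence everything
    have hkill : ∀ z : Fin u → ℂ, ∑ k, c k * z k = 0 := by
      intro z
      have hz : z ∈ Submodule.span ℂ (Set.range fun k => rows (ρ k)) := by
        rw [hv'span]; trivial
      induction hz using Submodule.span_induction with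
      | mem x hx =>
        obtain ⟨k₀, rfl⟩ := hx
        exact hck k₀
      | zero => simp
      | add x y _ _ hx hy => simp [mul_add, Finset.sum_add_distrib, hx, hy]
      | smul a x _ hx =>
        simp only [Pi.smul_apply, smul_eq_mul]
        rw [show ∑ k, c k * (a * x k) = a * ∑ k, c k * x k by
          rw [Finset.mul_sum]; exact Finset.sum_congr rfl fun k _ => by ring, hx, mul_zero]
    funext k
    have := hkill (Pi.single k 1)
    simpa [Pi.single_apply, Finset.sum_ite_eq'] using this
  have hLw_bij : Function.Bijective (L.comp T) := by
    refine ⟨hLw_inj, ?_⟩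
    exact (LinearMap.injective_iff_surjective_of_finrank_eq_finrank rfl).1 hLw_inj
  let E := LinearEquiv.ofBijective (L.comp T) hLw_bij
  set b : Fin u → Fin n → ℂ := fun k => T (E.symm (Pi.single k 1)) with hb
  -- membership
  have hbW : ∀ k, b k ∈ W := by
    intro k
    rw [hb]
    simp only [hT_apply]
    exact Submodule.sum_mem W fun k' _ => Submodule.smul_mem W _ (SetLike.coe_mem _)
  -- echelon property at pivots
  have hbech : ∀ k k', b k (ρ k') = if k' = k then 1 else 0 := by
    intro k k'
    have : b k (ρ k') = (L.comp T) (E.symm (Pi.single k 1)) k' := rfl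
    rw [this, show ((L.comp T) (E.symm (Pi.single k 1))) = E (E.symm (Pi.single k 1)) from rfl,
      E.apply_symm_apply]
    simp [Pi.single_apply]
  -- spanning
  have hbspan : W ≤ Submodule.span ℂ (Set.range b) := by
    intro x hx
    have hxsum : T (fun k => w.repr ⟨x, hx⟩ k) = x := by
      rw [hT_apply]
      have := w.sum_repr ⟨x, hx⟩
      calc ∑ k, w.repr ⟨x, hx⟩ k • (w k : Fin n → ℂ)
          = ((∑ k, w.repr ⟨x, hx⟩ k • w k : W) : Fin n → ℂ) := by
            push_cast [Submodule.coe_sum]; rfl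
        _ = x := by rw [this]
    set c : Fin u → ℂ := fun k => w.repr ⟨x, hx⟩ k with hcdef
    have hceq : c = E.symm (E c) := (E.symm_apply_apply c).symm
    have : x = ∑ k, (E c) k • b k := by
      rw [← hxsum]
      show T c = _
      conv_lhs => rw [hceq, pi_eq_sum_univ (E c)]
      rw [map_sum, map_sum]
      refine Finset.sum_congr rfl fun k _ => ?_
      rw [map_smul, map_smul]
      congr 1
      rw [hb]
      congr 1
      congr 1
      funext j
      simp [Pi.single_apply, eq_comm]
    rw [this]
    exact Submodule.sum_mem _ fun k _ =>
      Submodule.smul_mem _ _ (Submodule.subset_span ⟨k, rfl⟩)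
  -- build the coordinate partition
  haveI : Fintype (↥(Set.range ρ)ᶜ) := Fintype.ofFinite _
  have hcardρ : Fintype.card (Set.range ρ) = u := by
    rw [Set.card_range_of_injective hρinj, Fintype.card_fin]
  have hcardc : Fintype.card (↥(Set.range ρ)ᶜ) = n - u := by
    have := Fintype.card_compl_set (Set.range ρ)
    rw [this, hcardρ, Fintype.card_fin]
  let e2 : Fin (n - u) ≃ ↥(Set.range ρ)ᶜ := (Fintype.equivFinOfCardEq hcardc).symm
  have hσbij : Function.Bijective (Sum.elim ρ (fun l => ((e2 l : ↥(Set.range ρ)ᶜ) : Fin n))) := by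
    constructor
    · rintro (k1 | l1) (k2 | l2) h
      · simp only [Sum.elim_inl] at h; exact congrArg Sum.inl (hρinj h)
      · exact absurd ⟨k1, h⟩ (e2 l2).2
      · exact absurd ⟨k2, h.symm⟩ (e2 l1).2
      · simp only [Sum.elim_inr] at h
        exact congrArg Sum.inr (e2.injective (Subtype.coe_injective h))
    · intro i
      by_cases hi : i ∈ Set.range ρ
      · obtain ⟨k, rfl⟩ := hi; exact ⟨Sum.inl k, rfl⟩
      · exact ⟨Sum.inr (e2.symm ⟨i, hi⟩), by simp⟩
  refine ⟨Equiv.ofBijective _ hσbij, b, hbW, ?_, hbspan⟩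
  intro k k'
  exact hbech k k'

end KroneckerAux

namespace KroneckerAux

/-- Parameter space for bad pairs with `dim U = u`, `dim V = v`. -/
abbrev Theta (p q r u v : ℕ) : Type :=
  ((Fin (p - u) → Fin u → ℂ) × (Fin (q - v) → Fin v → ℂ)) ×
    ((Fin r → Fin v → Fin u → ℂ) × (Fin r → Fin q → Fin (p - u) → ℂ))

/-- The space of `r`-tuples of `q × p` complex matrices (as a pi type). -/
abbrev PSpace (p q r : ℕ) : Type := Fin r → Fin q → Fin p → ℂ

/-- Entries of the echelon spanning matrix for `V`. -/
noncomputable def bVent (p q r u v : ℕ) (τ : (Fin v ⊕ Fin (q - v)) ≃ Fin q)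
    (θ : Theta p q r u v) (a : Fin q) (k' : Fin v) : ℂ :=
  Sum.elim (fun k₀ : Fin v => if k₀ = k' then (1 : ℂ) else 0) (fun l => θ.1.2 l k') (τ.symm a)

/-- The polynomial parametrization of tuples admitting an invariant pair of type `(u,v)`
with pivot data `(σ, τ)`. -/
noncomputable def phiMap (p q r u v : ℕ) (σ : (Fin u ⊕ Fin (p - u)) ≃ Fin p)
    (τ : (Fin v ⊕ Fin (q - v)) ≃ Fin q) (θ : Theta p q r u v) : PSpace p q r :=
  fun j a i =>
    Sum.elim
      (fun k => (∑ k', bVent p q r u v τ θ a k' * θ.2.1 j k' k) -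
        ∑ l, θ.2.2 j a l * θ.1.1 l k)
      (fun l => θ.2.2 j a l)
      (σ.symm i)

lemma contDiff_phiMap (p q r u v : ℕ) (σ : (Fin u ⊕ Fin (p - u)) ≃ Fin p)
    (τ : (Fin v ⊕ Fin (q - v)) ≃ Fin q) :
    ContDiff ℝ 1 (phiMap p q r u v σ τ) := by
  have hMU : ∀ l k, ContDiff ℝ 1 (fun θ : Theta p q r u v => θ.1.1 l k) := fun l k =>
    contDiff_pi.1 (contDiff_pi.1 (contDiff_fst.comp contDiff_fst) l) k
  have hMV : ∀ l k', ContDiff ℝ 1 (fun θ : Theta p q r u v => θ.1.2 l k') := fun l k' =>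
    contDiff_pi.1 (contDiff_pi.1 (contDiff_snd.comp contDiff_fst) l) k'
  have hC : ∀ j k' k, ContDiff ℝ 1 (fun θ : Theta p q r u v => θ.2.1 j k' k) := fun j k' k =>
    contDiff_pi.1 (contDiff_pi.1 (contDiff_pi.1 (contDiff_fst.comp contDiff_snd) j) k') k
  have hD : ∀ j a l, ContDiff ℝ 1 (fun θ : Theta p q r u v => θ.2.2 j a l) := fun j a l =>
    contDiff_pi.1 (contDiff_pi.1 (contDiff_pi.1 (contDiff_snd.comp contDiff_snd) j) a) l
  have hbV : ∀ a k', ContDiff ℝ 1 (fun θ : Theta p q r u v => bVent p q r u v τ θ a k') := by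
    intro a k'
    unfold bVent
    cases hτa : τ.symm a with
    | inl k₀ => simp only [hτa, Sum.elim_inl]; exact contDiff_const
    | inr l => simp only [hτa, Sum.elim_inr]; exact hMV l k'
  rw [contDiff_pi]; intro j
  rw [contDiff_pi]; intro a
  rw [contDiff_pi]; intro i
  unfold phiMap
  cases hσi : σ.symm i with
  | inl k =>
    simp only [hσi, Sum.elim_inl]
    exact ((ContDiff.sum fun k' _ => (hbV a k').mul (hC j k' k)).sub
      (ContDiff.sum fun l _ => (hD j a l).mul (hMU l k)))
  | inr l =>
    simp only [hσi, Sum.elim_inr]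
    exact hD j a l

lemma finrank_theta (p q r u v : ℕ) :
    finrank ℝ (Theta p q r u v) =
      2 * ((p - u) * u + ((q - v) * v + (r * (v * u) + r * (q * (p - u))))) := by
  rw [finrank_real_of_complex]
  congr 1
  simp only [Theta, Module.finrank_prod, Module.finrank_pi_fintype,
    Module.finrank_fintype_fun_eq_card, Fintype.card_fin, Finset.sum_const, smul_eq_mul,
    Finset.card_univ, Module.finrank_self]
  ring

lemma finrank_pspace (p q r : ℕ) :
    finrank ℝ (PSpace p q r) = 2 * (r * (q * p)) := by
  rw [finrank_real_of_complex]
  congr 1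
  simp only [PSpace, Module.finrank_pi_fintype, Module.finrank_fintype_fun_eq_card,
    Fintype.card_fin, Finset.sum_const, smul_eq_mul, Finset.card_univ, Module.finrank_self]
  ring

end KroneckerAux

namespace KroneckerAux

open Submodule in
lemma coverage (p q r u v : ℕ) (AA : PSpace p q r)
    (U : Submodule ℂ (Fin p → ℂ)) (V : Submodule ℂ (Fin q → ℂ))
    (hinv : ∀ j, U.map (Matrix.mulVecLin (Matrix.of (AA j))) ≤ V)
    (hu : finrank ℂ U = u) (hv : finrank ℂ V = v) :
    ∃ (σ : (Fin u ⊕ Fin (p - u)) ≃ Fin p) (τ : (Fin v ⊕ Fin (q - v)) ≃ Fin q)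
      (θ : Theta p q r u v), phiMap p q r u v σ τ θ = AA := by
  classical
  obtain ⟨σ, bU, hbUW, hbUech, -⟩ := exists_echelon U hu
  obtain ⟨τ, bV, hbVW, hbVech, hbVspan⟩ := exists_echelon V hv
  set MU : Fin (p - u) → Fin u → ℂ := fun l k => bU k (σ (Sum.inr l)) with hMU
  set MV : Fin (q - v) → Fin v → ℂ := fun l k' => bV k' (τ (Sum.inr l)) with hMV
  set C : Fin r → Fin v → Fin u → ℂ :=
    fun j k' k => (Matrix.of (AA j)).mulVec (bU k) (τ (Sum.inl k')) with hC
  set D : Fin r → Fin q → Fin (p - u) → ℂ := fun j a l => AA j a (σ (Sum.inr l)) with hD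
  refine ⟨σ, τ, ((MU, MV), (C, D)), ?_⟩
  have key1 : ∀ j k, (Matrix.of (AA j)).mulVec (bU k) = ∑ k', C j k' k • bV k' := by
    intro j k
    have hyV : (Matrix.of (AA j)).mulVec (bU k) ∈ V :=
      hinv j ⟨bU k, hbUW k, rfl⟩
    have hyspan := hbVspan hyV
    rw [mem_span_range_iff_exists_fun] at hyspan
    obtain ⟨cc, hcc⟩ := hyspan
    have hccval : ∀ k', cc k' = C j k' k := by
      intro k'
      have h1 := congrFun hcc (τ (Sum.inl k'))
      simp only [Finset.sum_apply, Pi.smul_apply, smul_eq_mul] at h1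
      show cc k' = (Matrix.of (AA j)).mulVec (bU k) (τ (Sum.inl k'))
      rw [← h1]
      rw [Finset.sum_congr rfl (fun k'' _ => by rw [hbVech k'' k'])]
      simp
    rw [← hcc]
    exact Finset.sum_congr rfl fun k' _ => by rw [hccval k']
  have hbVent : ∀ (a : Fin q) (k' : Fin v),
      bVent p q r u v τ ((MU, MV), (C, D)) a k' = bV k' a := by
    intro a k'
    have ha : a = τ (τ.symm a) := (τ.apply_symm_apply a).symm
    unfold bVent
    cases hτa : τ.symm a with
    | inl k₀ =>
      simp only [Sum.elim_inl]
      rw [ha, hτa, hbVech k' k₀]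
    | inr l =>
      simp only [Sum.elim_inr]
      rw [ha, hτa]
  funext j a i
  have hi : i = σ (σ.symm i) := (σ.apply_symm_apply i).symm
  show Sum.elim _ _ (σ.symm i) = AA j a i
  cases hσi : σ.symm i with
  | inr l =>
    simp only [Sum.elim_inr]
    show AA j a (σ (Sum.inr l)) = AA j a i
    rw [hi, hσi]
  | inl k =>
    simp only [Sum.elim_inl]
    have heval := congrFun (key1 j k) a
    have hLHS : (Matrix.of (AA j)).mulVec (bU k) a
        = AA j a (σ (Sum.inl k)) + ∑ l, D j a l * MU l k := by
      show (∑ i', AA j a i' * bU k i') = _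
      rw [← Equiv.sum_comp σ (fun i' => AA j a i' * bU k i')]
      rw [Fintype.sum_sum_type]
      congr 1
      · rw [Finset.sum_congr rfl (fun k₀ _ => by rw [hbUech k k₀])]
        simp
    have hRHS : (∑ k', C j k' k • bV k') a
        = ∑ k', bVent p q r u v τ ((MU, MV), (C, D)) a k' * C j k' k := by
      simp only [Finset.sum_apply, Pi.smul_apply, smul_eq_mul]
      exact Finset.sum_congr rfl fun k' _ => by rw [hbVent a k']; ring
    have hfinal : ∑ k', bVent p q r u v τ ((MU, MV), (C, D)) a k' * C j k' k
        = AA j a (σ (Sum.inl k)) + ∑ l, D j a l * MU l k := by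
      rw [← hRHS, ← heval, hLHS]
    rw [hfinal]
    rw [hi, hσi]
    ring

end KroneckerAux

namespace KroneckerAux

/-- The numerical conditions making a pair of dimensions "destabilizing". -/
def IsBad (p q u v : ℕ) : Prop := 1 ≤ u ∧ p * v ≤ q * u ∧ ¬(u = p ∧ v = q)

end KroneckerAux


/-- A tuple of linear maps `ℂ^p → ℂ^q` is semistable if every pair of subspaces
`U ⊆ ℂ^p`, `V ⊆ ℂ^q` with `A_j(U) ⊆ V` for all `j` satisfies `q·dim U ≤ p·dim V`. -/
def KroneckerSemistable (p q r : ℕ) (A : Fin r → ((Fin p → ℂ) →ₗ[ℂ] (Fin q → ℂ))) : Prop :=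
  ∀ (U : Submodule ℂ (Fin p → ℂ)) (V : Submodule ℂ (Fin q → ℂ)),
    (∀ j, U.map (A j) ≤ V) → q * Module.finrank ℂ U ≤ p * Module.finrank ℂ V

/-- A tuple is stable if it is semistable and the equality `q·dim U = p·dim V` for an
invariant pair holds only for the trivial pairs. -/
def KroneckerStable (p q r : ℕ) (A : Fin r → ((Fin p → ℂ) →ₗ[ℂ] (Fin q → ℂ))) : Prop :=
  KroneckerSemistable p q r A ∧
  ∀ (U : Submodule ℂ (Fin p → ℂ)) (V : Submodule ℂ (Fin q → ℂ)),
    (∀ j, U.map (A j) ≤ V) → q * Module.finrank ℂ U = p * Module.finrank ℂ V →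
      (U = ⊥ ∧ V = ⊥) ∨ (U = ⊤ ∧ V = ⊤)

open KroneckerAux in
/-- If `p·q·r > p² + q²` (equivalently `p/q + q/p < r`), then there exists a
stable `r`-tuple of linear maps `ℂ^p → ℂ^q`. -/
theorem exists_stable_of_large (p q r : ℕ) (hp : 0 < p) (hq : 0 < q) (hr : 0 < r)
    (h : p ^ 2 + q ^ 2 < p * q * r) :
    ∃ A : Fin r → ((Fin p → ℂ) →ₗ[ℂ] (Fin q → ℂ)), KroneckerStable p q r A := by
  classical
  haveI hfe : ∀ (α β : Type) [Fintype α] [Fintype β] [DecidableEq α] [DecidableEq β],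
      Finite (α ≃ β) := fun α β _ _ _ _ =>
    Finite.of_injective (fun e : α ≃ β => (e : α → β)) (fun _ _ hh => Equiv.coe_fn_injective hh)
  obtain ⟨AA, hAA⟩ := avoid
    (F := PSpace p q r)
    (by rw [finrank_pspace]; positivity)
    (ι := Σ w : {w : Fin (p + 1) × Fin (q + 1) // IsBad p q w.1 w.2},
      ((Fin ((w.1.1 : ℕ)) ⊕ Fin (p - (w.1.1 : ℕ))) ≃ Fin p) ×
        ((Fin ((w.1.2 : ℕ)) ⊕ Fin (q - (w.1.2 : ℕ))) ≃ Fin q))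
    (fun i => Theta p q r (i.1.1.1 : ℕ) (i.1.1.2 : ℕ))
    (fun i => phiMap p q r (i.1.1.1 : ℕ) (i.1.1.2 : ℕ) i.2.1 i.2.2)
    (fun i => contDiff_phiMap p q r (i.1.1.1 : ℕ) (i.1.1.2 : ℕ) i.2.1 i.2.2)
    (by
      rintro ⟨⟨⟨u0, v0⟩, hbad⟩, στ⟩
      dsimp only
      rw [finrank_theta, finrank_pspace]
      have harith := arith p q r (u0 : ℕ) (v0 : ℕ) h hp hq hbad.1
        (u0.is_le) (v0.is_le) hbad.2.1 hbad.2.2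
      omega)
  set A : Fin r → ((Fin p → ℂ) →ₗ[ℂ] (Fin q → ℂ)) :=
    fun j => Matrix.mulVecLin (Matrix.of (AA j)) with hA
  have noBad : ∀ (U : Submodule ℂ (Fin p → ℂ)) (V : Submodule ℂ (Fin q → ℂ)),
      (∀ j, U.map (A j) ≤ V) → ¬ IsBad p q (Module.finrank ℂ U) (Module.finrank ℂ V) := by
    intro U V hinv hbad
    have hup : Module.finrank ℂ U ≤ p := by
      have h1 := Submodule.finrank_le U
      rwa [Module.finrank_fintype_fun_eq_card, Fintype.card_fin] at h1
    have hvq : Module.finrank ℂ V ≤ q := by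
      have h1 := Submodule.finrank_le V
      rwa [Module.finrank_fintype_fun_eq_card, Fintype.card_fin] at h1
    obtain ⟨σ, τ, θ, hθ⟩ := coverage p q r (Module.finrank ℂ U) (Module.finrank ℂ V)
      AA U V hinv rfl rfl
    exact hAA ⟨⟨(⟨Module.finrank ℂ U, by omega⟩, ⟨Module.finrank ℂ V, by omega⟩), hbad⟩,
      (σ, τ)⟩ θ hθ
  refine ⟨A, ?_, ?_⟩
  · -- semistability
    intro U V hinv
    by_contra hlt
    push_neg at hlt
    apply noBad U V hinv
    refine ⟨?_, le_of_lt hlt, ?_⟩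
    · rcases Nat.eq_zero_or_pos (Module.finrank ℂ U) with h0 | h1
      · rw [h0] at hlt; simp at hlt
      · exact h1
    · rintro ⟨h1, h2⟩
      rw [h1, h2, mul_comm] at hlt
      exact lt_irrefl _ hlt
  · -- the equality case
    intro U V hinv heq
    rcases Nat.eq_zero_or_pos (Module.finrank ℂ U) with h0 | h1
    · left
      have hv0 : Module.finrank ℂ V = 0 := by
        rw [h0, mul_zero] at heq
        have := heq.symm
        rcases Nat.mul_eq_zero.1 this with h' | h'
        · omega
        · exact h'
      constructor
      · exact Submodule.finrank_eq_zero.1 h0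
      · exact Submodule.finrank_eq_zero.1 hv0
    · by_cases htop : Module.finrank ℂ U = p ∧ Module.finrank ℂ V = q
      · right
        constructor
        · apply Submodule.eq_top_of_finrank_eq
          rw [htop.1, Module.finrank_fintype_fun_eq_card, Fintype.card_fin]
        · apply Submodule.eq_top_of_finrank_eq
          rw [htop.2, Module.finrank_fintype_fun_eq_card, Fintype.card_fin]
      · exfalso
        exact noBad U V hinv ⟨h1, le_of_eq heq.symm, htop⟩
end

section
/- Let p ≥ 3 be an odd integer. Then there exist antisymmetric p×p complex matrices A_1, A_2, A_3 (i.e., A_iᵀ = −A_i for i = 1, 2, 3) such that the triple (A_1, A_2, A_3) is semistable: every pair of linear subspaces V, W ⊆ ℂ^p with A_i(V) ⊆ W for i = 1, 2, 3 satisfies dim W ≥ dim V. -/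
open Matrix
namespace Semistable12
noncomputable section

variable (m : ℕ)

def Em : Matrix (Fin (2*m+1)) (Fin (2*m+1)) ℂ :=
  Matrix.of fun j k => if (j : ℕ) + 1 = (k : ℕ) then 1 else 0

def Hm : Matrix (Fin (2*m+1)) (Fin (2*m+1)) ℂ :=
  Matrix.diagonal fun j => (m : ℂ) - (j : ℕ)

def Jm : Matrix (Fin (2*m+1)) (Fin (2*m+1)) ℂ :=
  Matrix.of fun j k => if (j : ℕ) + (k : ℕ) = 2*m then (-1 : ℂ)^(j : ℕ) else 0

def rv (j : Fin (2*m+1)) : Fin (2*m+1) := ⟨2*m - (j:ℕ), by omega⟩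

lemma rv_val (j : Fin (2*m+1)) : ((rv m j : Fin (2*m+1)) : ℕ) = 2*m - (j:ℕ) := rfl

lemma Jm_mul_apply (X : Matrix (Fin (2*m+1)) (Fin (2*m+1)) ℂ) (j k : Fin (2*m+1)) :
    (Jm m * X) j k = (-1 : ℂ)^(j:ℕ) * X (rv m j) k := by
  rw [Matrix.mul_apply, Finset.sum_eq_single (rv m j)]
  · simp only [Jm, of_apply]
    rw [if_pos (by rw [rv_val]; omega)]
  · intro b _ hb
    simp only [Jm, of_apply]
    rw [if_neg, zero_mul]
    intro hc; apply hb; apply Fin.ext; rw [rv_val]; omega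
  · intro h; exact absurd (Finset.mem_univ _) h

lemma mul_Jm_apply (X : Matrix (Fin (2*m+1)) (Fin (2*m+1)) ℂ) (j k : Fin (2*m+1)) :
    (X * Jm m) j k = X j (rv m k) * (-1 : ℂ)^(2*m - (k:ℕ)) := by
  rw [Matrix.mul_apply, Finset.sum_eq_single (rv m k)]
  · simp only [Jm, of_apply]
    rw [if_pos (by rw [rv_val]; omega), rv_val]
  · intro b _ hb
    simp only [Jm, of_apply]
    rw [if_neg, mul_zero]
    intro hc; apply hb; apply Fin.ext; rw [rv_val]; omega
  · intro h; exact absurd (Finset.mem_univ _) h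

lemma Jm_transpose : (Jm m)ᵀ = Jm m := by
  ext j k
  simp only [Jm, transpose_apply, of_apply]
  by_cases h : (j : ℕ) + (k : ℕ) = 2*m
  · rw [if_pos (by omega), if_pos h]
    have : (k:ℕ) = (j:ℕ) + (2*m - 2*(j:ℕ)) ∨ (j:ℕ) = (k:ℕ) + (2*m - 2*(k:ℕ)) := by omega
    have hev : ∀ a b : ℕ, a + 2*b = 2*m - 0 → True := fun _ _ _ => trivial
    have hjk : ((-1:ℂ))^(k:ℕ) * ((-1:ℂ))^(j:ℕ) = ((-1:ℂ))^((k:ℕ)+(j:ℕ)) := (pow_add _ _ _).symm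
    have h2m : ((-1:ℂ))^((k:ℕ)+(j:ℕ)) = 1 := by
      rw [show (k:ℕ)+(j:ℕ) = 2*m by omega, pow_mul]; norm_num
    calc ((-1:ℂ))^(k:ℕ) = ((-1:ℂ))^(k:ℕ) * (((-1:ℂ))^(j:ℕ) * ((-1:ℂ))^(j:ℕ)) := by
            rw [← pow_add, show (j:ℕ)+(j:ℕ) = 2*(j:ℕ) by omega, pow_mul]; norm_num
      _ = (((-1:ℂ))^(k:ℕ) * ((-1:ℂ))^(j:ℕ)) * ((-1:ℂ))^(j:ℕ) := by ring
      _ = ((-1:ℂ))^(j:ℕ) := by rw [hjk, h2m, one_mul]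
  · rw [if_neg (by omega), if_neg h]

lemma Jm_mul_Jm : Jm m * Jm m = 1 := by
  ext j k
  rw [Jm_mul_apply]
  simp only [Jm, of_apply]
  rw [rv_val]
  by_cases h : j = k
  · subst h
    rw [if_pos (by omega), Matrix.one_apply_eq, ← pow_add,
      show (j:ℕ) + (2*m - (j:ℕ)) = 2*m by omega, pow_mul]
    norm_num
  · rw [if_neg, Matrix.one_apply_ne h, mul_zero]
    intro hc; apply h; apply Fin.ext; omega

lemma Jm_mul_Et_add : Jm m * (Em m)ᵀ + Em m * Jm m = 0 := by
  ext j k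
  rw [Matrix.add_apply, Jm_mul_apply, mul_Jm_apply, Matrix.zero_apply]
  simp only [Em, of_apply, transpose_apply]
  rw [rv_val, rv_val]
  by_cases h : (j:ℕ) + (k:ℕ) + 1 = 2*m
  · rw [if_pos (by omega), if_pos (by omega), mul_one, one_mul,
      show 2*m - (k:ℕ) = (j:ℕ)+1 by omega, pow_succ]
    ring
  · rw [if_neg (by omega), if_neg (by omega), mul_zero, zero_mul, add_zero]

lemma Jm_mul_H_add : Jm m * Hm m + Hm m * Jm m = 0 := by
  ext j k
  rw [Matrix.add_apply, Jm_mul_apply, Matrix.zero_apply]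
  simp only [Hm]
  rw [Matrix.diagonal_mul, Matrix.diagonal_apply]
  by_cases h : (j:ℕ) + (k:ℕ) = 2*m
  · rw [if_pos (by apply Fin.ext; rw [rv_val]; omega)]
    simp only [Jm, of_apply]
    rw [if_pos h, rv_val]
    have hk : ((2*m - (j:ℕ) : ℕ) : ℂ) = 2*(m:ℂ) - (j:ℕ) := by
      have : (j:ℕ) ≤ 2*m := by omega
      push_cast [Nat.cast_sub this]; ring
    rw [hk]
    have hjk : ((k:ℕ) : ℂ) = 2*(m:ℂ) - (j:ℕ) := by
      have := congrArg (Nat.cast : ℕ → ℂ) h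
      push_cast at this
      linear_combination this
    ring
  · rw [if_neg (by intro hc; apply h; have := congrArg (Fin.val) hc; rw [rv_val] at this; omega)]
    simp only [Jm, of_apply]
    rw [if_neg h]
    ring


local notation "J" => Jm m

def gm : Matrix (Fin (2*m+1)) (Fin (2*m+1)) ℂ :=
  ((1 - Complex.I)/2) • 1 + ((1 + Complex.I)/2) • J

def gm' : Matrix (Fin (2*m+1)) (Fin (2*m+1)) ℂ :=
  ((1 + Complex.I)/2) • 1 + ((1 - Complex.I)/2) • J

local notation "g" => gm m
local notation "g'" => gm' m

lemma mul_formula (a b c d : ℂ) :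
    (a • (1 : Matrix (Fin (2*m+1)) (Fin (2*m+1)) ℂ) + b • J) * (c • 1 + d • J)
      = (a*c + b*d) • 1 + (a*d + b*c) • J := by
  simp only [Matrix.add_mul, Matrix.mul_add, Matrix.smul_mul, Matrix.mul_smul,
    Matrix.one_mul, Matrix.mul_one, Jm_mul_Jm, smul_smul, add_smul, smul_add]
  module

lemma gm_mul_gm' : g * g' = 1 := by
  rw [gm, gm', mul_formula]
  have h1 : (1 - Complex.I)/2 * ((1 + Complex.I)/2) + (1 + Complex.I)/2 * ((1 - Complex.I)/2) = 1 := by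
    linear_combination (-1/2 : ℂ) * Complex.I_sq
  have h2 : (1 - Complex.I)/2 * ((1 - Complex.I)/2) + (1 + Complex.I)/2 * ((1 + Complex.I)/2) = 0 := by
    linear_combination (1/2 : ℂ) * Complex.I_sq
  rw [h1, h2, zero_smul, add_zero, one_smul]

lemma gm'_mul_gm : g' * g = 1 := by
  rw [gm, gm', mul_formula]
  have h1 : (1 + Complex.I)/2 * ((1 - Complex.I)/2) + (1 - Complex.I)/2 * ((1 + Complex.I)/2) = 1 := by
    linear_combination (-1/2 : ℂ) * Complex.I_sq
  have h2 : (1 + Complex.I)/2 * ((1 + Complex.I)/2) + (1 - Complex.I)/2 * ((1 - Complex.I)/2) = 0 := by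
    linear_combination (1/2 : ℂ) * Complex.I_sq
  rw [h1, h2, zero_smul, add_zero, one_smul]

lemma gm_transpose : gᵀ = g := by
  simp [gm, Matrix.transpose_add, Matrix.transpose_smul, Matrix.transpose_one, Jm_transpose]

lemma gm'_transpose : g'ᵀ = g' := by
  simp [gm', Matrix.transpose_add, Matrix.transpose_smul, Matrix.transpose_one, Jm_transpose]

lemma gm'_mul_Jm : g' * J = g := by
  simp only [gm', gm, Matrix.add_mul, Matrix.smul_mul, Matrix.one_mul, Jm_mul_Jm]
  exact add_comm _ _

lemma Jm_mul_gm' : J * g' = g := by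
  simp only [gm', gm, Matrix.mul_add, Matrix.mul_smul, Matrix.mul_one, Jm_mul_Jm]
  exact add_comm _ _

lemma conj_antisym (B : Matrix (Fin (2*m+1)) (Fin (2*m+1)) ℂ)
    (hB : J * Bᵀ + B * J = 0) : (g' * B * g)ᵀ = -(g' * B * g) := by
  have key : g * Bᵀ * g' + g' * B * g = 0 := by
    have expand : g' * (J * Bᵀ + B * J) * g' = g * Bᵀ * g' + g' * B * g := by
      rw [Matrix.mul_add, Matrix.add_mul]
      congr 1
      · simp only [← Matrix.mul_assoc]
        rw [gm'_mul_Jm]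
      · simp only [← Matrix.mul_assoc]
        rw [Matrix.mul_assoc (g' * B) J (gm' m), Jm_mul_gm']
    rw [← expand, hB, Matrix.mul_zero, Matrix.zero_mul]
  have ht : (g' * B * g)ᵀ = g * Bᵀ * g' := by
    rw [Matrix.transpose_mul, Matrix.transpose_mul, gm_transpose, gm'_transpose,
      ← Matrix.mul_assoc]
  rw [ht]
  linear_combination (norm := abel) key


lemma Em_mulVec (v : Fin (2*m+1) → ℂ) (j : Fin (2*m+1)) :
    (Em m).mulVec v j = if h : (j:ℕ)+1 < 2*m+1 then v ⟨(j:ℕ)+1, h⟩ else 0 := by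
  rw [Matrix.mulVec, dotProduct]
  split_ifs with h
  · rw [Finset.sum_eq_single (⟨(j:ℕ)+1, h⟩ : Fin (2*m+1))]
    · simp [Em]
    · intro b _ hb
      simp only [Em, of_apply]
      rw [if_neg (fun hc => hb (Fin.ext hc.symm)), zero_mul]
    · intro h'; exact absurd (Finset.mem_univ _) h'
  · apply Finset.sum_eq_zero
    intro b _
    simp only [Em, of_apply]
    rw [if_neg (fun hc => h (by rw [hc]; exact b.isLt)), zero_mul]

lemma Ft_mulVec (v : Fin (2*m+1) → ℂ) (j : Fin (2*m+1)) :
    ((Em m)ᵀ).mulVec v j = if h : 0 < (j:ℕ) then v ⟨(j:ℕ)-1, by omega⟩ else 0 := by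
  rw [Matrix.mulVec, dotProduct]
  split_ifs with h
  · rw [Finset.sum_eq_single (⟨(j:ℕ)-1, by omega⟩ : Fin (2*m+1))]
    · simp only [Em, of_apply, transpose_apply]
      rw [if_pos (show ((j:ℕ)-1) + 1 = (j:ℕ) by omega), one_mul]
    · intro b _ hb
      simp only [Em, of_apply, transpose_apply]
      rw [if_neg (fun hc => hb (Fin.ext (show (b:ℕ) = (j:ℕ)-1 by omega))), zero_mul]
    · intro h'; exact absurd (Finset.mem_univ _) h'
  · apply Finset.sum_eq_zero
    intro b _
    simp only [Em, of_apply, transpose_apply]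
    rw [if_neg (by omega), zero_mul]

lemma Hm_mulVec (v : Fin (2*m+1) → ℂ) (j : Fin (2*m+1)) :
    (Hm m).mulVec v j = ((m:ℂ) - (j:ℕ)) * v j :=
  Matrix.mulVec_diagonal _ _ _

lemma core (hm : 1 ≤ m) (V W : Submodule ℂ (Fin (2*m+1) → ℂ))
    (hE : V.map (Em m).mulVecLin ≤ W)
    (hF : V.map ((Em m)ᵀ).mulVecLin ≤ W)
    (hH : V.map (Hm m).mulVecLin ≤ W) :
    Module.finrank ℂ V ≤ Module.finrank ℂ W := by
  classical
  let P : Fin (2*m+1) → (Fin (2*m+1) → ℂ) → Prop :=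
    fun k v => v ∈ V ∧ v k ≠ 0 ∧ ∀ j, k < j → v j = 0
  let T : Finset (Fin (2*m+1)) := Finset.univ.filter (fun k => ∃ v, P k v)
  let u : Fin (2*m+1) → (Fin (2*m+1) → ℂ) := fun k => if h : ∃ v, P k v then h.choose else 0
  have hu : ∀ k ∈ T, u k ∈ V ∧ u k k ≠ 0 ∧ ∀ j, k < j → u k j = 0 := by
    intro k hk
    rw [Finset.mem_filter] at hk
    obtain ⟨-, h⟩ := hk
    simp only [u, dif_pos h]
    exact h.choose_spec
  -- Step 1 : finrank V ≤ T.card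
  have hspan : V ≤ Submodule.span ℂ ((T.image u : Finset (Fin (2*m+1) → ℂ)) : Set (Fin (2*m+1) → ℂ)) := by
    have main : ∀ N, N ≤ 2*m+1 → ∀ v ∈ V, (∀ j : Fin (2*m+1), N ≤ (j:ℕ) → v j = 0) →
        v ∈ Submodule.span ℂ ((T.image u : Finset (Fin (2*m+1) → ℂ)) : Set (Fin (2*m+1) → ℂ)) := by
      intro N
      induction N with
      | zero =>
        intro _ v _ h0
        have : v = 0 := funext fun j => h0 j (Nat.zero_le _)
        rw [this]; exact zero_mem _
      | succ N ih =>
        intro hN v hv hvz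
        have hNn : N < 2*m+1 := by omega
        have hkv : ((⟨N, hNn⟩ : Fin (2*m+1)) : ℕ) = N := rfl
        by_cases hvk : v ⟨N, hNn⟩ = 0
        · refine ih (by omega) v hv ?_
          intro j hj
          rcases Nat.eq_or_lt_of_le hj with h | h
          · have : j = ⟨N, hNn⟩ := Fin.ext h.symm
            rw [this]; exact hvk
          · exact hvz j h
        · have hkT : (⟨N, hNn⟩ : Fin (2*m+1)) ∈ T := by
            rw [Finset.mem_filter]
            refine ⟨Finset.mem_univ _, ⟨v, hv, hvk, fun j hj => hvz j ?_⟩⟩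
            rw [Fin.lt_def] at hj
            omega
          obtain ⟨huV, huk, hutop⟩ := hu _ hkT
          have hmem : u ⟨N, hNn⟩ ∈ Submodule.span ℂ ((T.image u : Finset (Fin (2*m+1) → ℂ)) : Set (Fin (2*m+1) → ℂ)) := by
            apply Submodule.subset_span
            rw [Finset.coe_image]
            exact ⟨_, hkT, rfl⟩
          have hsub : v - (v ⟨N, hNn⟩ / u ⟨N, hNn⟩ ⟨N, hNn⟩) • u ⟨N, hNn⟩ ∈ V :=
            sub_mem hv (Submodule.smul_mem _ _ huV)
          have hz : ∀ j : Fin (2*m+1), N ≤ (j:ℕ) →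
              (v - (v ⟨N, hNn⟩ / u ⟨N, hNn⟩ ⟨N, hNn⟩) • u ⟨N, hNn⟩) j = 0 := by
            intro j hj
            rcases Nat.eq_or_lt_of_le hj with h | h
            · have hjk : j = ⟨N, hNn⟩ := Fin.ext h.symm
              subst hjk
              simp only [Pi.sub_apply, Pi.smul_apply, smul_eq_mul]
              rw [div_mul_cancel₀ _ huk]
              ring
            · have h1 : v j = 0 := hvz j h
              have h2 : u ⟨N, hNn⟩ j = 0 := hutop j (by rw [Fin.lt_def]; omega)
              simp [h1, h2]
          have hin := ih (by omega) _ hsub hz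
          have hvrw : v = (v - (v ⟨N, hNn⟩ / u ⟨N, hNn⟩ ⟨N, hNn⟩) • u ⟨N, hNn⟩)
              + (v ⟨N, hNn⟩ / u ⟨N, hNn⟩ ⟨N, hNn⟩) • u ⟨N, hNn⟩ := by abel
          rw [hvrw]
          exact add_mem hin (Submodule.smul_mem _ _ hmem)
    intro v hv
    exact main (2*m+1) le_rfl v hv (fun j hj => absurd j.isLt (by omega))
  have step1 : Module.finrank ℂ V ≤ T.card :=
    calc Module.finrank ℂ V
        ≤ Module.finrank ℂ (Submodule.span ℂ ((T.image u : Finset (Fin (2*m+1) → ℂ)) : Set (Fin (2*m+1) → ℂ))) :=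
          Submodule.finrank_mono hspan
      _ ≤ (T.image u).card := finrank_span_finset_le_card _
      _ ≤ T.card := Finset.card_image_le
  -- Step 2 : T.card ≤ finrank W
  have hmlt : m < 2*m+1 := by omega
  have hm1lt : m + 1 < 2*m+1 := by omega
  let a : Fin (2*m+1) := ⟨m, hmlt⟩
  let b : Fin (2*m+1) := ⟨m+1, hm1lt⟩
  have hav : (a : ℕ) = m := rfl
  have hbv : (b : ℕ) = m+1 := rfl
  have hab : a ≠ b := by
    intro h
    have := congrArg Fin.val h
    rw [hav, hbv] at this
    omega
  let φ : Fin (2*m+1) → Fin (2*m+1) := fun k => Equiv.swap a b k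
  have hφinj : Function.Injective φ := (Equiv.swap a b).injective
  let w : Fin (2*m+1) → (Fin (2*m+1) → ℂ) := fun k =>
    if k = a then ((Em m)ᵀ).mulVec (u k) else if k = b then (Em m).mulVec (u k) else (Hm m).mulVec (u k)
  have hwW : ∀ k ∈ T, w k ∈ W := by
    intro k hk
    obtain ⟨huV, -, -⟩ := hu k hk
    simp only [w]
    split_ifs
    · exact hF ⟨u k, huV, rfl⟩
    · exact hE ⟨u k, huV, rfl⟩
    · exact hH ⟨u k, huV, rfl⟩
  have hwtop : ∀ k ∈ T, w k (φ k) ≠ 0 ∧ ∀ j, φ k < j → w k j = 0 := by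
    intro k hk
    obtain ⟨huV, huk, hutop⟩ := hu k hk
    by_cases hka : k = a
    · have hφk : φ k = b := by simp only [φ, hka]; exact Equiv.swap_apply_left a b
      have hwk : w k = ((Em m)ᵀ).mulVec (u k) := by simp only [w, if_pos hka]
      have hkv : (k : ℕ) = m := by rw [hka]
      rw [hwk, hφk]
      constructor
      · rw [Ft_mulVec, dif_pos (show 0 < (b:ℕ) by rw [hbv]; omega)]
        have heq : (⟨(b:ℕ)-1, by omega⟩ : Fin (2*m+1)) = k :=
          Fin.ext (show (b:ℕ)-1 = (k:ℕ) by omega)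
        rw [heq]; exact huk
      · intro j hj
        rw [Fin.lt_def, hbv] at hj
        rw [Ft_mulVec, dif_pos (show 0 < (j:ℕ) by omega)]
        apply hutop
        rw [Fin.lt_def]
        show (k:ℕ) < (j:ℕ) - 1
        omega
    · by_cases hkb : k = b
      · have hφk : φ k = a := by simp only [φ, hkb]; exact Equiv.swap_apply_right a b
        have hwk : w k = (Em m).mulVec (u k) := by simp only [w, if_neg hka, if_pos hkb]
        have hkv : (k : ℕ) = m+1 := by rw [hkb]
        rw [hwk, hφk]
        constructor
        · rw [Em_mulVec, dif_pos (show (a:ℕ)+1 < 2*m+1 by rw [hav]; omega)]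
          have heq : (⟨(a:ℕ)+1, by rw [hav]; omega⟩ : Fin (2*m+1)) = k :=
            Fin.ext (show (a:ℕ)+1 = (k:ℕ) by omega)
          rw [heq]; exact huk
        · intro j hj
          rw [Fin.lt_def, hav] at hj
          rw [Em_mulVec]
          split_ifs with h
          · apply hutop
            rw [Fin.lt_def]
            show (k:ℕ) < (j:ℕ) + 1
            omega
          · rfl
      · have hφk : φ k = k := Equiv.swap_apply_of_ne_of_ne hka hkb
        have hwk : w k = (Hm m).mulVec (u k) := by simp only [w, if_neg hka, if_neg hkb]
        rw [hwk, hφk]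
        constructor
        · rw [Hm_mulVec]
          apply mul_ne_zero _ huk
          rw [sub_ne_zero]
          intro hc
          apply hka
          apply Fin.ext
          rw [hav]
          exact_mod_cast hc.symm
        · intro j hj
          rw [Hm_mulVec, hutop j hj, mul_zero]
  -- linear independence of the w k, k ∈ T
  have hind : LinearIndependent ℂ (fun k : T => w (k : Fin (2*m+1))) := by
    rw [Fintype.linearIndependent_iff]
    intro c hc
    by_contra hne
    push_neg at hne
    obtain ⟨k1, hk1⟩ := hne
    have hSne : (Finset.univ.filter (fun k : T => c k ≠ 0)).Nonempty :=
      ⟨k1, Finset.mem_filter.mpr ⟨Finset.mem_univ _, hk1⟩⟩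
    obtain ⟨k₀, hk₀S, hk₀max⟩ :=
      Finset.exists_max_image (Finset.univ.filter (fun k : T => c k ≠ 0))
        (fun k : T => ((φ (k : Fin (2*m+1))) : ℕ)) hSne
    have hck₀ : c k₀ ≠ 0 := (Finset.mem_filter.mp hk₀S).2
    have heval := congrFun hc (φ (k₀ : Fin (2*m+1)))
    rw [Finset.sum_apply] at heval
    rw [Finset.sum_eq_single k₀] at heval
    · simp only [Pi.smul_apply, smul_eq_mul, Pi.zero_apply] at heval
      exact hck₀ (by
        rcases mul_eq_zero.mp heval with h | h
        · exact h
        · exact absurd h (hwtop _ k₀.2).1)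
    · intro k _ hkne
      by_cases hck : c k = 0
      · simp [hck]
      · have hkS : k ∈ Finset.univ.filter (fun k : T => c k ≠ 0) :=
          Finset.mem_filter.mpr ⟨Finset.mem_univ _, hck⟩
        have hle := hk₀max k hkS
        have hne2 : φ (k : Fin (2*m+1)) ≠ φ (k₀ : Fin (2*m+1)) := by
          intro h
          exact hkne (Subtype.ext (hφinj h))
        have hlt : φ (k : Fin (2*m+1)) < φ (k₀ : Fin (2*m+1)) := by
          rw [Fin.lt_def]
          rcases Nat.lt_or_ge ((φ (k : Fin (2*m+1))) : ℕ) ((φ (k₀ : Fin (2*m+1))) : ℕ) with h | h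
          · exact h
          · exact absurd (Fin.ext (Nat.le_antisymm hle h)) hne2
        simp only [Pi.smul_apply, smul_eq_mul]
        rw [(hwtop _ k.2).2 _ hlt, mul_zero]
    · intro h; exact absurd (Finset.mem_univ _) h
  have hind' : LinearIndependent ℂ (fun k : T => (⟨w (k : Fin (2*m+1)), hwW _ k.2⟩ : W)) := by
    apply LinearIndependent.of_comp W.subtype
    exact hind
  have step2 : T.card ≤ Module.finrank ℂ W := by
    have := hind'.fintype_card_le_finrank
    rwa [Fintype.card_coe] at this
  exact le_trans step1 step2



/-- conjugated matrices: antisymmetric -/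
def Am : Fin 3 → Matrix (Fin (2*m+1)) (Fin (2*m+1)) ℂ :=
  ![gm' m * Em m * gm m, gm' m * (Em m)ᵀ * gm m, gm' m * Hm m * gm m]

lemma Jm_mul_Ft_add : Jm m * Em m + (Em m)ᵀ * Jm m = 0 := by
  have h := Jm_mul_Et_add m
  have h2 := congrArg (fun X => Jm m * X * Jm m) h
  simp only [Matrix.mul_add, Matrix.add_mul, Matrix.mul_zero, Matrix.zero_mul] at h2
  have e1 : Jm m * (Jm m * (Em m)ᵀ) * Jm m = (Em m)ᵀ * Jm m := by
    rw [← Matrix.mul_assoc, Jm_mul_Jm, Matrix.one_mul]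
  have e2 : Jm m * (Em m * Jm m) * Jm m = Jm m * Em m := by
    rw [Matrix.mul_assoc, Matrix.mul_assoc, Jm_mul_Jm, Matrix.mul_one]
  rw [e1, e2] at h2
  linear_combination (norm := abel) h2

lemma Am_antisym : ∀ i, (Am m i)ᵀ = - Am m i := by
  intro i
  fin_cases i
  · exact conj_antisym m (Em m) (Jm_mul_Et_add m)
  · refine conj_antisym m ((Em m)ᵀ) ?_
    rw [Matrix.transpose_transpose]
    exact Jm_mul_Ft_add m
  · refine conj_antisym m (Hm m) ?_
    have : (Hm m)ᵀ = Hm m := Matrix.diagonal_transpose _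
    rw [this]
    exact Jm_mul_H_add m

/-- the linear equivalence given by g -/
def gEquiv : (Fin (2*m+1) → ℂ) ≃ₗ[ℂ] (Fin (2*m+1) → ℂ) :=
  LinearEquiv.ofLinear (gm m).mulVecLin (gm' m).mulVecLin
    (by rw [← Matrix.mulVecLin_mul, gm_mul_gm', Matrix.mulVecLin_one])
    (by rw [← Matrix.mulVecLin_mul, gm'_mul_gm, Matrix.mulVecLin_one])

lemma semistable (hm : 1 ≤ m) (V W : Submodule ℂ (Fin (2*m+1) → ℂ))
    (h : ∀ i, V.map (Am m i).mulVecLin ≤ W) :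
    Module.finrank ℂ V ≤ Module.finrank ℂ W := by
  set V' := V.map (gm m).mulVecLin with hV'
  set W' := W.map (gm m).mulVecLin with hW'
  have hmap : ∀ B : Matrix (Fin (2*m+1)) (Fin (2*m+1)) ℂ,
      V.map (gm' m * B * gm m).mulVecLin ≤ W → V'.map B.mulVecLin ≤ W' := by
    intro B hB
    have key : B * gm m = gm m * (gm' m * B * gm m) := by
      rw [← Matrix.mul_assoc, ← Matrix.mul_assoc, gm_mul_gm', Matrix.one_mul]
    rw [hV', ← Submodule.map_comp, ← Matrix.mulVecLin_mul, key, Matrix.mulVecLin_mul,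
      Submodule.map_comp, hW']
    exact Submodule.map_mono hB
  have hE' : V'.map (Em m).mulVecLin ≤ W' := hmap _ (h 0)
  have hF' : V'.map ((Em m)ᵀ).mulVecLin ≤ W' := hmap _ (h 1)
  have hH' : V'.map (Hm m).mulVecLin ≤ W' := hmap _ (h 2)
  have hrk := core m hm V' W' hE' hF' hH'
  have hV : Module.finrank ℂ V' = Module.finrank ℂ V := by
    rw [hV']
    exact LinearEquiv.finrank_map_eq (gEquiv m) V
  have hW : Module.finrank ℂ W' = Module.finrank ℂ W := by
    rw [hW']
    exact LinearEquiv.finrank_map_eq (gEquiv m) W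
  rw [hV, hW] at hrk
  exact hrk

end
end Semistable12

open Semistable12 in
/-- For every odd `p ≥ 3` there exist antisymmetric `p × p` complex matrices
`A 0, A 1, A 2` whose triple is semistable: every pair of subspaces `V, W ⊆ ℂ^p` with
`A i (V) ≤ W` for all `i` satisfies `dim W ≥ dim V`. -/
theorem exists_semistable_antisymmetric_triple (p : ℕ) (hp : 3 ≤ p) (hodd : Odd p) :
    ∃ A : Fin 3 → Matrix (Fin p) (Fin p) ℂ,
      (∀ i, (A i)ᵀ = - A i) ∧
      ∀ V W : Submodule ℂ (Fin p → ℂ), (∀ i, V.map (A i).mulVecLin ≤ W) →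
        Module.finrank ℂ V ≤ Module.finrank ℂ W := by
  obtain ⟨m, rfl⟩ := hodd
  have hm : 1 ≤ m := by omega
  exact ⟨Am m, Am_antisym m, fun V W h => semistable m hm V W h⟩
end

section
/- Let p, q ≥ 1. Suppose ℂ^p = F_1 ⊕ ⋯ ⊕ F_k is an internal direct sum decomposition with associated projections π_i : ℂ^p → ℂ^p (projection onto F_i along the other summands), ℂ^q = H_1 ⊕ ⋯ ⊕ H_l with associated projections ρ_j : ℂ^q → ℂ^q, let m_1, …, m_k and n_1, …, n_l be integers, and let A : ℂ^p → ℂ^q be a ℂ-linear map. Define g : (0,∞) → Hom(ℂ^p, ℂ^q) by g(t) = Σ_{i=1}^{k} Σ_{j=1}^{l} t^{n_j − m_i} · (ρ_j ∘ A ∘ π_i). Then g(t) converges to a limit as t → 0⁺ (i.e., there exists a linear map L with g(t) → L along the filter of positive reals tending to 0) if and only if A(U_n) ⊆ V_n for every n ∈ ℤ, where U_n = Σ_{i : m_i ≥ n} F_i and V_n = Σ_{j : n_j ≥ n} H_j. -/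
open Finset Filter Topology


lemma projEq {M : Type*} [AddCommGroup M] [Module ℂ M] {k : ℕ}
    (F : Fin k → Submodule ℂ M) (hF : DirectSum.IsInternal F)
    (π : Fin k → (M →ₗ[ℂ] M)) (hmem : ∀ i x, π i x ∈ F i)
    (hsum : ∑ i, π i = LinearMap.id) {i i' : Fin k} {x : M} (hx : x ∈ F i') :
    π i x = if i = i' then x else 0 := by
  classical
  have hxsum : x = ∑ i'', π i'' x := by
    conv_lhs => rw [← LinearMap.id_apply (R := ℂ) x, ← hsum]
    rw [LinearMap.sum_apply]
  set e := LinearEquiv.ofBijective (DirectSum.coeLinearMap F) hF with he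
  have h1 : e.symm x = ∑ i'', e.symm (π i'' x) := by rw [← map_sum, ← hxsum]
  have h2 : ((e.symm x) i : M) = π i x := by
    rw [h1, DFinsupp.finset_sum_apply, Submodule.coe_sum, Finset.sum_eq_single i]
    · rw [he, hF.ofBijective_coeLinearMap_of_mem (hmem i x)]
    · intro b _ hb
      rw [he, hF.ofBijective_coeLinearMap_of_mem_ne hb (hmem b x)]
      rfl
    · simp
  by_cases hii : i = i'
  · subst hii
    rw [if_pos rfl, ← h2, he, hF.ofBijective_coeLinearMap_of_mem hx]
  · rw [if_neg hii, ← h2, he, hF.ofBijective_coeLinearMap_of_mem_ne (Ne.symm hii) hx]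
    rfl

lemma sumSubmodule_le {M : Type*} [AddCommGroup M] [Module ℂ M] {ι : Type*}
    {s : Finset ι} {p : ι → Submodule ℂ M} {Q : Submodule ℂ M}
    (h : ∀ i ∈ s, p i ≤ Q) : (∑ i ∈ s, p i) ≤ Q := by
  classical
  induction s using Finset.induction_on with
  | empty => simp
  | insert _ _ hns ih =>
    rw [Finset.sum_insert hns]
    exact sup_le (h _ (Finset.mem_insert_self _ _))
      (ih fun i hi => h i (Finset.mem_insert_of_mem hi))

lemma condEquiv {M M' : Type*} [AddCommGroup M] [Module ℂ M] [AddCommGroup M'] [Module ℂ M']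
    {k l : ℕ} (F : Fin k → Submodule ℂ M) (H : Fin l → Submodule ℂ M')
    (hF : DirectSum.IsInternal F) (hH : DirectSum.IsInternal H)
    (π : Fin k → (M →ₗ[ℂ] M)) (ρ : Fin l → (M' →ₗ[ℂ] M'))
    (hπmem : ∀ i x, π i x ∈ F i) (hπsum : ∑ i, π i = LinearMap.id)
    (hρmem : ∀ j y, ρ j y ∈ H j) (hρsum : ∑ j, ρ j = LinearMap.id)
    (m : Fin k → ℤ) (n : Fin l → ℤ) (A : M →ₗ[ℂ] M') :
    (∀ N : ℤ,
      Submodule.map A (∑ i ∈ Finset.univ.filter (fun i => N ≤ m i), F i)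
        ≤ ∑ j ∈ Finset.univ.filter (fun j => N ≤ n j), H j) ↔
    ∀ i j, n j < m i → (ρ j) ∘ₗ A ∘ₗ (π i) = 0 := by
  constructor
  · intro hN i j hlt
    ext x
    have h1 : π i x ∈ ∑ i' ∈ Finset.univ.filter (fun i' => m i ≤ m i'), F i' :=
      Finset.single_le_sum (f := F) (fun _ _ => bot_le)
        (by simp) (hπmem i x)
    have h2 : A (π i x) ∈ ∑ j' ∈ Finset.univ.filter (fun j' => m i ≤ n j'), H j' :=
      hN (m i) ⟨π i x, h1, rfl⟩
    have h3 : (∑ j' ∈ Finset.univ.filter (fun j' => m i ≤ n j'), H j')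
        ≤ LinearMap.ker (ρ j) := by
      refine sumSubmodule_le fun j' hj' y hy => ?_
      rw [LinearMap.mem_ker, projEq H hH ρ hρmem hρsum hy, if_neg]
      rintro rfl
      exact absurd (Finset.mem_filter.mp hj').2 (not_le.mpr hlt)
    simpa using h3 h2
  · intro hz N
    rintro _ ⟨x, hx, rfl⟩
    have hx0 : ∀ i, m i < N → π i x = 0 := by
      intro i hi
      have hker : (∑ i' ∈ Finset.univ.filter (fun i' => N ≤ m i'), F i')
          ≤ LinearMap.ker (π i) := by
        refine sumSubmodule_le fun i' hi' y hy => ?_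
        rw [LinearMap.mem_ker, projEq F hF π hπmem hπsum hy, if_neg]
        rintro rfl
        exact absurd (Finset.mem_filter.mp hi').2 (not_le.mpr hi)
      simpa using hker hx
    have hAx : A x = ∑ i, ∑ j, ρ j (A (π i x)) := by
      have h4 : x = ∑ i, π i x := by
        conv_lhs => rw [← LinearMap.id_apply (R := ℂ) x, ← hπsum]
        rw [LinearMap.sum_apply]
      calc A x = ∑ i, A (π i x) := by conv_lhs => rw [h4, map_sum]
        _ = ∑ i, ∑ j, ρ j (A (π i x)) := by
            refine Finset.sum_congr rfl fun i _ => ?_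
            conv_lhs => rw [← LinearMap.id_apply (R := ℂ) (A (π i x)), ← hρsum]
            rw [LinearMap.sum_apply]
    rw [hAx]
    refine Submodule.sum_mem _ fun i _ => Submodule.sum_mem _ fun j _ => ?_
    by_cases h1 : m i < N
    · simp [hx0 i h1]
    · by_cases h2 : n j < m i
      · have h5 := hz i j h2
        have : ρ j (A (π i x)) = ((ρ j) ∘ₗ A ∘ₗ (π i)) x := rfl
        rw [this, h5]
        simp
      · refine Finset.single_le_sum (f := H) (fun _ _ => bot_le) ?_ (hρmem j _)
        simp only [Finset.mem_filter, Finset.mem_univ, true_and]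
        omega
lemma zpow_neg_tendsto_atTop {e : ℤ} (he : e < 0) :
    Tendsto (fun t : ℝ => t ^ e) (𝓝[>] (0:ℝ)) atTop := by
  have hd : e = -((-e).toNat : ℤ) := by omega
  have hd0 : (-e).toNat ≠ 0 := by omega
  have h0 : Tendsto (fun t : ℝ => t ^ (-e).toNat) (𝓝[>] (0:ℝ)) (𝓝[>] (0:ℝ)) := by
    rw [tendsto_nhdsWithin_iff]
    constructor
    · have := ((continuous_pow ((-e).toNat)).tendsto (0:ℝ)).mono_left
        (nhdsWithin_le_nhds (s := Set.Ioi (0:ℝ)))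
      simpa [zero_pow hd0] using this
    · filter_upwards [self_mem_nhdsWithin] with t ht
      exact pow_pos (Set.mem_Ioi.mp ht) _
  have hinv : Tendsto (fun t : ℝ => (t ^ (-e).toNat)⁻¹) (𝓝[>] (0:ℝ)) atTop :=
    tendsto_inv_nhdsGT_zero.comp h0
  refine hinv.congr fun t => ?_
  rw [← zpow_natCast, ← zpow_neg, ← hd]

lemma term_tendsto {E : Type*} [NormedAddCommGroup E] [NormedSpace ℂ E]
    (e : ℤ) (C : E) (hC : e < 0 → C = 0) :
    Tendsto (fun t : ℝ => ((t ^ e : ℝ) : ℂ) • C) (𝓝[>] (0:ℝ))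
      (𝓝 ((((0:ℝ) ^ e.toNat : ℝ) : ℂ) • C)) := by
  rcases le_or_gt 0 e with he | he
  · obtain ⟨d, rfl⟩ : ∃ d : ℕ, e = (d : ℤ) := ⟨e.toNat, (Int.toNat_of_nonneg he).symm⟩
    simp only [zpow_natCast, Int.toNat_natCast]
    have hc : Continuous fun t : ℝ => ((t ^ d : ℝ) : ℂ) • C := by fun_prop
    exact (hc.tendsto 0).mono_left nhdsWithin_le_nhds
  · rw [hC he]
    simp only [smul_zero]
    exact tendsto_const_nhds

/-- Given internal direct sum decompositions `ℂ^p = ⊕ F_i` and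
`ℂ^q = ⊕ H_j` with associated projections `π_i`, `ρ_j`, integer weights `m_i`, `n_j`, and a
linear map `A : ℂ^p → ℂ^q`, the map `g(t) = Σ_{i,j} t^{n_j − m_i}·(ρ_j ∘ A ∘ π_i)` converges
as `t → 0⁺` if and only if `A(U_N) ⊆ V_N` for every `N ∈ ℤ`, where
`U_N = Σ_{m_i ≥ N} F_i` and `V_N = Σ_{n_j ≥ N} H_j`. -/
theorem one_parameter_limit_iff_filtration_invariant (p q : ℕ) (hp : 1 ≤ p) (hq : 1 ≤ q)
    (k l : ℕ) (F : Fin k → Submodule ℂ (Fin p → ℂ)) (H : Fin l → Submodule ℂ (Fin q → ℂ))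
    (hF : DirectSum.IsInternal F) (hH : DirectSum.IsInternal H)
    (π : Fin k → ((Fin p → ℂ) →ₗ[ℂ] (Fin p → ℂ)))
    (ρ : Fin l → ((Fin q → ℂ) →ₗ[ℂ] (Fin q → ℂ)))
    (hπmem : ∀ i x, π i x ∈ F i) (hπsum : ∑ i, π i = LinearMap.id)
    (hρmem : ∀ j y, ρ j y ∈ H j) (hρsum : ∑ j, ρ j = LinearMap.id)
    (m : Fin k → ℤ) (n : Fin l → ℤ)
    (A : (Fin p → ℂ) →ₗ[ℂ] (Fin q → ℂ)) :
    (∃ L : (Fin p → ℂ) →L[ℂ] (Fin q → ℂ),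
      Tendsto (fun t : ℝ => ∑ i, ∑ j,
          (((t ^ (n j - m i) : ℝ) : ℂ) •
            LinearMap.toContinuousLinearMap ((ρ j) ∘ₗ A ∘ₗ (π i))))
        (𝓝[>] (0 : ℝ)) (𝓝 L)) ↔
    ∀ N : ℤ,
      Submodule.map A (∑ i ∈ Finset.univ.filter (fun i => N ≤ m i), F i)
        ≤ ∑ j ∈ Finset.univ.filter (fun j => N ≤ n j), H j := by
  rw [condEquiv F H hF hH π ρ hπmem hπsum hρmem hρsum m n A]
  constructor
  · rintro ⟨L, hL⟩ i j hlt
    by_contra hne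
    obtain ⟨x, hx⟩ : ∃ x, ((ρ j) ∘ₗ A ∘ₗ (π i)) x ≠ 0 := by
      by_contra h
      push_neg at h
      exact hne (LinearMap.ext fun y => by simpa using h y)
    set v := ρ j (A (π i x)) with hv
    have hv0 : v ≠ 0 := hx
    have he : n j - m i < 0 := by omega
    have hππ : ∀ i', π i' (π i x) = if i' = i then π i x else 0 :=
      fun i' => projEq F hF π hπmem hπsum (hπmem i x)
    have hρρ : ∀ j' (z : Fin q → ℂ), ρ j (ρ j' z) = if j = j' then ρ j' z else 0 :=
      fun j' z => projEq H hH ρ hρmem hρsum (hρmem j' z)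
    have h1 : Tendsto (fun t : ℝ => (∑ i', ∑ j',
        (((t ^ (n j' - m i') : ℝ) : ℂ) •
          LinearMap.toContinuousLinearMap ((ρ j') ∘ₗ A ∘ₗ (π i')))) (π i x))
        (𝓝[>] (0:ℝ)) (𝓝 (L (π i x))) :=
      ((ContinuousLinearMap.apply ℂ (Fin q → ℂ) (π i x)).continuous.tendsto L).comp hL
    have h2 : Tendsto (fun t : ℝ => ρ j ((∑ i', ∑ j',
        (((t ^ (n j' - m i') : ℝ) : ℂ) •
          LinearMap.toContinuousLinearMap ((ρ j') ∘ₗ A ∘ₗ (π i')))) (π i x)))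
        (𝓝[>] (0:ℝ)) (𝓝 (ρ j (L (π i x)))) :=
      (((ρ j).toContinuousLinearMap.continuous.tendsto _).comp h1)
    have hg : ∀ t : ℝ, ρ j ((∑ i', ∑ j',
        (((t ^ (n j' - m i') : ℝ) : ℂ) •
          LinearMap.toContinuousLinearMap ((ρ j') ∘ₗ A ∘ₗ (π i')))) (π i x))
        = ((t ^ (n j - m i) : ℝ) : ℂ) • v := by
      intro t
      simp only [ContinuousLinearMap.coe_sum', Finset.sum_apply,
        ContinuousLinearMap.coe_smul', Pi.smul_apply,
        LinearMap.coe_toContinuousLinearMap', LinearMap.coe_comp, Function.comp_apply,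
        map_sum, map_smul, hππ, apply_ite, map_zero, smul_zero, hρρ, smul_ite]
      rw [Finset.sum_eq_single i]
      · rw [Finset.sum_eq_single j] <;> simp +contextual [hv, Ne.symm]
      · intro b _ hb; simp [hb]
      · simp
    have h3 : Tendsto (fun t : ℝ => ((t ^ (n j - m i) : ℝ) : ℂ) • v)
        (𝓝[>] (0:ℝ)) (𝓝 (ρ j (L (π i x)))) := by
      refine h2.congr fun t => hg t
    have h4 := h3.norm
    have h5 : Tendsto (fun t : ℝ => ‖((t ^ (n j - m i) : ℝ) : ℂ) • v‖)
        (𝓝[>] (0:ℝ)) atTop := by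
      have h6 := (zpow_neg_tendsto_atTop he).atTop_mul_const (norm_pos_iff.mpr hv0)
      refine h6.congr' ?_
      filter_upwards [self_mem_nhdsWithin] with t ht
      rw [norm_smul, Complex.norm_real, Real.norm_eq_abs,
        abs_of_nonneg (zpow_nonneg (le_of_lt ht) _)]
    exact not_tendsto_atTop_of_tendsto_nhds h4 h5
  · intro hz
    refine ⟨∑ i, ∑ j, (((0:ℝ) ^ (n j - m i).toNat : ℝ) : ℂ) •
      LinearMap.toContinuousLinearMap ((ρ j) ∘ₗ A ∘ₗ (π i)), ?_⟩
    exact tendsto_finset_sum _ fun i _ => tendsto_finset_sum _ fun j _ =>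
      term_tendsto (n j - m i) (LinearMap.toContinuousLinearMap ((ρ j) ∘ₗ A ∘ₗ (π i)))
        (fun h => by rw [hz i j (by omega)]; ext y; simp)
end

section
/- Let p, q ≥ 1 and let h(z,w) = Σ_{i=1}^{p} z_i·conj(w_i) − Σ_{i=p+1}^{p+q} z_i·conj(w_i) be the standard Hermitian form of signature (p,q) on ℂ^{p+q}. Let g_0 ∈ SU(p,q) be such that every eigenvector v ∈ ℂ^{p+q} of g_0 satisfies h(v,v) ≠ 0. Then there exists a neighborhood U of g_0 in SU(p,q) such that for every g ∈ U, every complex eigenvalue of g has modulus 1. -/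
open Matrix

/-- The matrix `J = diag(I_p, −I_q)`. -/
def Jmat (p q : ℕ) : Matrix (Fin (p + q)) (Fin (p + q)) ℂ :=
  Matrix.diagonal fun i => if (i : ℕ) < p then 1 else -1

/-- The group `SU(p,q)`, as a set of `(p+q) × (p+q)` complex matrices. -/
def SU (p q : ℕ) : Set (Matrix (Fin (p + q)) (Fin (p + q)) ℂ) :=
  {M | M.det = 1 ∧ Mᴴ * Jmat p q * M = Jmat p q}

/-- The standard Hermitian form of signature `(p,q)` on `ℂ^{p+q}`. -/
noncomputable def hermForm (p q : ℕ) (z w : Fin (p + q) → ℂ) : ℂ :=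
  ∑ i : Fin (p + q), (if (i : ℕ) < p then 1 else -1) * z i * (starRingEnd ℂ) (w i)

/-!
If `g` preserves `h` and `g v = μ v`, then `h(v,v) = |μ|² h(v,v)`, so an eigenvector for an
eigenvalue off the unit circle is isotropic. It therefore suffices that the matrices having an
isotropic eigenvector form a closed set, which does not contain `g₀`. This holds for eigenvectors
in any closed cone: normalising them to the compact unit sphere, the set is the projection of a
closed subset of `Matrix × sphere`, and the projection along a compact factor is a closed map.
-/

theorem exists_eq_smul_iff_mul_comm {n K : Type*} [Field K] {u v : n → K} (hv : v ≠ 0) :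
    (∃ μ : K, u = μ • v) ↔ ∀ i j, u i * v j = u j * v i := by
  refine ⟨fun ⟨μ, hμ⟩ i j => by simp only [hμ, Pi.smul_apply, smul_eq_mul]; ring, fun h => ?_⟩
  obtain ⟨j, hj⟩ := Function.ne_iff.mp hv
  refine ⟨u j / v j, funext fun i => ?_⟩
  rw [Pi.smul_apply, smul_eq_mul, div_mul_eq_mul_div, eq_div_iff hj, h]

theorem isClosed_setOf_exists_eigenvector_mem {n : Type*} [Fintype n] {C : Set (n → ℂ)}
    (hC : IsClosed C) (hcone : ∀ v ∈ C, ∀ c : ℂ, c • v ∈ C) :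
    IsClosed {M : Matrix n n ℂ | ∃ v ∈ C, v ≠ 0 ∧ ∃ μ : ℂ, M *ᵥ v = μ • v} := by
  -- Unlike `∃ μ, M v = μ v`, the condition `∀ i j, (M v) i * v j = (M v) j * v i` is closed.
  let E : Set (Matrix n n ℂ × (n → ℂ)) :=
    {x | x.2 ∈ C ∧ ∀ i j, (x.1 *ᵥ x.2) i * x.2 j = (x.1 *ᵥ x.2) j * x.2 i}
  have hE : IsClosed E := by
    simp only [E, Set.ofPred_and, Set.ofPred_forall]
    exact (hC.preimage continuous_snd).inter <|
      isClosed_iInter fun i => isClosed_iInter fun j => isClosed_eq (by fun_prop) (by fun_prop)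
  let S : Set (Matrix n n ℂ × Metric.sphere (0 : n → ℂ) 1) := Prod.map id Subtype.val ⁻¹' E
  convert isClosedMap_fst_of_compactSpace S (hE.preimage (by fun_prop)) using 1
  ext M
  constructor
  · rintro ⟨v, hvC, hv0, μ, hMv⟩
    have hnorm : ‖v‖ ≠ 0 := norm_ne_zero_iff.mpr hv0
    set c : ℂ := ((‖v‖⁻¹ : ℝ) : ℂ)
    have hc : c • v ≠ 0 := smul_ne_zero (by simpa [c] using hnorm) hv0
    refine ⟨(M, ⟨c • v, by simp [c, norm_smul, hnorm]⟩), ⟨hcone v hvC c, ?_⟩, rfl⟩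
    have hMcv : M *ᵥ (c • v) = μ • c • v := by rw [mulVec_smul, hMv, smul_comm]
    exact (exists_eq_smul_iff_mul_comm hc).mp ⟨μ, hMcv⟩
  · rintro ⟨⟨M, v, hv⟩, ⟨hvC, hMv⟩, rfl⟩
    have hv0 : v ≠ 0 := by rintro rfl; simp at hv
    obtain ⟨μ, hμ⟩ := (exists_eq_smul_iff_mul_comm hv0).mpr hMv
    exact ⟨v, hvC, hv0, μ, hμ⟩

section hermForm

variable {p q : ℕ}

theorem hermForm_eq_dotProduct (z w : Fin (p + q) → ℂ) :
    hermForm p q z w = star w ⬝ᵥ Jmat p q *ᵥ z := by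
  simp only [hermForm, Jmat, dotProduct, mulVec_diagonal, Pi.star_apply, Complex.star_def]
  exact Finset.sum_congr rfl fun i _ => by ring

theorem hermForm_smul_self (c : ℂ) (v : Fin (p + q) → ℂ) :
    hermForm p q (c • v) (c • v) = Complex.normSq c * hermForm p q v v := by
  simp only [hermForm, Finset.mul_sum, Pi.smul_apply, smul_eq_mul, map_mul,
    Complex.normSq_eq_conj_mul_self]
  exact Finset.sum_congr rfl fun i _ => by ring

theorem hermForm_mulVec_self {M : Matrix (Fin (p + q)) (Fin (p + q)) ℂ}
    (hM : Mᴴ * Jmat p q * M = Jmat p q) (v : Fin (p + q) → ℂ) :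
    hermForm p q (M *ᵥ v) (M *ᵥ v) = hermForm p q v v := by
  rw [hermForm_eq_dotProduct, hermForm_eq_dotProduct, star_mulVec, mulVec_mulVec,
    ← dotProduct_mulVec, mulVec_mulVec, ← mul_assoc, hM]

theorem isClosed_setOf_hermForm_self_eq_zero : IsClosed {v | hermForm p q v v = 0} :=
  isClosed_eq (by unfold hermForm; fun_prop) continuous_const

theorem hermForm_self_eq_zero_of_mulVec_eq_smul {M : Matrix (Fin (p + q)) (Fin (p + q)) ℂ}
    (hM : Mᴴ * Jmat p q * M = Jmat p q) {μ : ℂ} {v : Fin (p + q) → ℂ} (hv : M *ᵥ v = μ • v)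
    (hμ : ‖μ‖ ≠ 1) : hermForm p q v v = 0 := by
  have h := hermForm_mulVec_self hM v
  rw [hv, hermForm_smul_self] at h
  have hμ' : (Complex.normSq μ : ℂ) ≠ 1 := by
    rw [Complex.normSq_eq_norm_sq]
    exact_mod_cast (pow_eq_one_iff_of_nonneg (norm_nonneg μ) two_ne_zero).not.mpr hμ
  have h' : ((Complex.normSq μ : ℂ) - 1) * hermForm p q v v = 0 := by
    rw [sub_mul, h, one_mul, sub_self]
  exact (mul_eq_zero.mp h').resolve_left (sub_ne_zero.mpr hμ')

end hermForm

theorem eigenvalues_modulus_one_near_general (p q : ℕ) (g₀ : SU p q)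
    (hiso : ∀ (v : Fin (p + q) → ℂ) (μ : ℂ), v ≠ 0 →
      (g₀ : Matrix (Fin (p + q)) (Fin (p + q)) ℂ).mulVec v = μ • v → hermForm p q v v ≠ 0) :
    ∃ U : Set (SU p q), IsOpen U ∧ g₀ ∈ U ∧
      ∀ g ∈ U, ∀ (μ : ℂ) (v : Fin (p + q) → ℂ), v ≠ 0 →
        (g : Matrix (Fin (p + q)) (Fin (p + q)) ℂ).mulVec v = μ • v → ‖μ‖ = 1 := by
  have hZ := isClosed_setOf_exists_eigenvector_mem
    (isClosed_setOf_hermForm_self_eq_zero (p := p) (q := q))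
    fun v hv c => by rw [Set.mem_ofPred_eq, hermForm_smul_self, hv.out, mul_zero]
  refine ⟨Subtype.val ⁻¹' _ᶜ, hZ.isOpen_compl.preimage continuous_subtype_val, ?_, ?_⟩
  · rintro ⟨v, hv, hv0, μ, hμ⟩
    exact hiso v μ hv0 hμ hv
  · intro g hg μ v hv0 hgv
    by_contra hμ
    exact hg ⟨v, hermForm_self_eq_zero_of_mulVec_eq_smul g.2.2 hgv hμ, hv0, μ, hgv⟩

/-- If `g₀ ∈ SU(p,q)` has no isotropic eigenvector, then there is a
neighborhood of `g₀` in `SU(p,q)` on which every complex eigenvalue of every element has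
modulus `1`. -/
theorem eigenvalues_modulus_one_near (p q : ℕ) (hp : 1 ≤ p) (hq : 1 ≤ q) (g₀ : SU p q)
    (hiso : ∀ (v : Fin (p + q) → ℂ) (μ : ℂ), v ≠ 0 →
      (g₀ : Matrix (Fin (p + q)) (Fin (p + q)) ℂ).mulVec v = μ • v → hermForm p q v v ≠ 0) :
    ∃ U : Set (SU p q), IsOpen U ∧ g₀ ∈ U ∧
      ∀ g ∈ U, ∀ (μ : ℂ) (v : Fin (p + q) → ℂ), v ≠ 0 →
        (g : Matrix (Fin (p + q)) (Fin (p + q)) ℂ).mulVec v = μ • v → ‖μ‖ = 1 :=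
  eigenvalues_modulus_one_near_general p q g₀ hiso
end

section
/- Let p, q, r, s be positive integers. Then there exists ε > 0, depending only on p, q, r, s, with the following property. Let η = (η_i^j) (1 ≤ i ≤ p, 1 ≤ j ≤ s) and ζ = (ζ_i^j) (1 ≤ i ≤ q, 1 ≤ j ≤ s) be real weights with |η_i^j| < ε and |ζ_i^j| < ε for all i, j, let A = (A_1, …, A_r) be ℂ-linear maps from ℂ^p to ℂ^q, let F = (F^1, …, F^s) be complete flags in ℂ^p and H = (H^1, …, H^s) complete flags in ℂ^q. Then (A, F, H) is (η, ζ)-semistable if and only if every pair of linear subspaces U ⊆ ℂ^p, V ⊆ ℂ^q with A_j(U) ⊆ V for all j ∈ {1,…,r} and with (U,V) ∉ {({0},{0}), (ℂ^p, ℂ^q)} satisfies: either p·dim V > q·dim U, or p·dim V = q·dim U and q·(|η(U ∩ F)| + |ζ(V ∩ H)|) ≤ (‖η‖ + ‖ζ‖)·dim V. -/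
/-!
Write `μ(U, V) = (p·dim V − q·dim U) + c(U, V)`, where the correction `c` is linear in the
weights. Along a complete flag the jumps of `U` sum to `dim U`, so `|c| ≤ 2s(p + q)ε`, which is
`< 1` for small `ε`. As the first summand is an integer, `μ ≥ 0` then holds exactly when
`q·dim U < p·dim V`, or `q·dim U = p·dim V` and `c ≥ 0`; in the latter case `dim U / p = dim V / q`
and `c ≥ 0` is the stated weight inequality. The two trivial pairs have `μ = 0`.
-/

open Finset

/-- The total induced weight `|η(U ∩ F)|` of the weighted flags `(F^j, η^j)` restricted to a
subspace `U`: `Σ_j Σ_{i=1}^p η_i^j·(dim(U ∩ F^j_{i−1}) − dim(U ∩ F^j_i))`. -/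
noncomputable def inducedWeight (p s : ℕ) (η : Fin s → ℕ → ℝ)
    (F : Fin s → ℕ → Submodule ℂ (Fin p → ℂ)) (U : Submodule ℂ (Fin p → ℂ)) : ℝ :=
  ∑ j, ∑ i ∈ Finset.Icc 1 p, η j i *
    ((Module.finrank ℂ ↥(U ⊓ F j (i - 1)) : ℝ) - (Module.finrank ℂ ↥(U ⊓ F j i) : ℝ))

/-- The total weight `‖η‖ = Σ_j Σ_{i=1}^p η_i^j`. -/
noncomputable def totalWeight (p s : ℕ) (η : Fin s → ℕ → ℝ) : ℝ :=
  ∑ j : Fin s, ∑ i ∈ Finset.Icc 1 p, η j i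

/-- The quantity `μ_{η,ζ}(U,V)` from the definition of `(η,ζ)`-semistability of a feathered
Kronecker representation. -/
noncomputable def muFeather (p q s : ℕ) (η ζ : Fin s → ℕ → ℝ)
    (F : Fin s → ℕ → Submodule ℂ (Fin p → ℂ)) (H : Fin s → ℕ → Submodule ℂ (Fin q → ℂ))
    (U : Submodule ℂ (Fin p → ℂ)) (V : Submodule ℂ (Fin q → ℂ)) : ℝ :=
  (totalWeight p s η / p - q) * (Module.finrank ℂ ↥U : ℝ) - inducedWeight p s η F U
    + (totalWeight q s ζ / q + p) * (Module.finrank ℂ ↥V : ℝ) - inducedWeight q s ζ H V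

open Module

lemma Finset.sum_Icc_one_sub_pred {M : Type*} [AddCommGroup M] (f : ℕ → M) (n : ℕ) :
    ∑ i ∈ Icc 1 n, (f (i - 1) - f i) = f 0 - f n := by
  induction n with
  | zero => simp
  | succ n ih =>
    rw [Finset.sum_Icc_succ_top (by omega), ih, Nat.add_sub_cancel]
    abel

lemma Int.cast_add_nonneg_iff_of_abs_lt_one {n : ℤ} {e : ℝ} (he : |e| < 1) :
    0 ≤ (n : ℝ) + e ↔ 0 < n ∨ n = 0 ∧ 0 ≤ e := by
  obtain ⟨he₁, he₂⟩ := abs_lt.mp he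
  rcases lt_trichotomy n 0 with hn | rfl | hn
  · have : (n : ℝ) ≤ -1 := by exact_mod_cast Int.le_sub_one_of_lt hn
    constructor
    · intro h; linarith
    · rintro (h | ⟨h, -⟩) <;> omega
  · simp
  · have : (1 : ℝ) ≤ n := by exact_mod_cast hn
    exact ⟨fun _ => Or.inl hn, fun _ => by linarith⟩

section Flag

variable {K V : Type*} [Field K] [AddCommGroup V] [Module K V]

/-- `V = F 0 ⊃ F 1 ⊃ ⋯ ⊃ F p = 0`; the values `F i` for `i > p` are irrelevant. -/
def IsCompleteFlag (p : ℕ) (F : ℕ → Submodule K V) : Prop :=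
  (∀ i < p, F (i + 1) ≤ F i) ∧ ∀ i ≤ p, finrank K (F i) = p - i

namespace IsCompleteFlag

variable [FiniteDimensional K V] {p : ℕ} {F : ℕ → Submodule K V}

lemma zero_eq_top (hF : IsCompleteFlag p F) (hV : finrank K V = p) : F 0 = ⊤ :=
  Submodule.eq_top_of_finrank_eq (by rw [hF.2 0 p.zero_le, hV, Nat.sub_zero])

lemma last_eq_bot (hF : IsCompleteFlag p F) : F p = ⊥ :=
  Submodule.finrank_eq_zero.mp (by rw [hF.2 p le_rfl, Nat.sub_self])

lemma finrank_inf_le_pred (hF : IsCompleteFlag p F) (U : Submodule K V) {i : ℕ}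
    (hi : i ∈ Icc 1 p) : finrank K ↥(U ⊓ F i) ≤ finrank K ↥(U ⊓ F (i - 1)) := by
  obtain ⟨hi₁, hi₂⟩ := mem_Icc.mp hi
  have hle : F i ≤ F (i - 1) := by simpa [Nat.sub_add_cancel hi₁] using hF.1 (i - 1) (by omega)
  exact Submodule.finrank_mono (inf_le_inf_left U hle)

lemma sum_finrank_inf_sub (hF : IsCompleteFlag p F) (hV : finrank K V = p)
    (U : Submodule K V) :
    ∑ i ∈ Icc 1 p, ((finrank K ↥(U ⊓ F (i - 1)) : ℝ) - finrank K ↥(U ⊓ F i)) = finrank K U := by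
  rw [Finset.sum_Icc_one_sub_pred (fun i => (finrank K ↥(U ⊓ F i) : ℝ)), hF.zero_eq_top hV,
    hF.last_eq_bot, inf_top_eq, inf_bot_eq, finrank_bot, Nat.cast_zero, sub_zero]

end IsCompleteFlag

end Flag

lemma Submodule.finrank_fin_fun_le {K : Type*} [Field K] {n : ℕ} (U : Submodule K (Fin n → K)) :
    (finrank K U : ℝ) ≤ n := by
  exact_mod_cast (Submodule.finrank_le U).trans_eq (finrank_fin_fun K)

section Weights

variable {p q s : ℕ} {ε : ℝ} {η ζ : Fin s → ℕ → ℝ}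
  {F : Fin s → ℕ → Submodule ℂ (Fin p → ℂ)} {H : Fin s → ℕ → Submodule ℂ (Fin q → ℂ)}

lemma inducedWeight_bot : inducedWeight p s η F ⊥ = 0 := by
  refine sum_eq_zero fun j _ => sum_eq_zero fun i _ => ?_
  rw [bot_inf_eq, bot_inf_eq, sub_self, mul_zero]

lemma inducedWeight_top (hF : ∀ j, IsCompleteFlag p (F j)) :
    inducedWeight p s η F ⊤ = totalWeight p s η := by
  refine sum_congr rfl fun j _ => sum_congr rfl fun i hi => ?_
  obtain ⟨hi₁, hi₂⟩ := mem_Icc.mp hi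
  rw [top_inf_eq, top_inf_eq, (hF j).2 (i - 1) (by omega), (hF j).2 i hi₂,
    show p - (i - 1) = p - i + 1 by omega]
  push_cast
  ring

lemma abs_inducedWeight_le (hη : ∀ j, ∀ i ∈ Icc 1 p, |η j i| ≤ ε)
    (hF : ∀ j, IsCompleteFlag p (F j)) (U : Submodule ℂ (Fin p → ℂ)) :
    |inducedWeight p s η F U| ≤ ε * s * finrank ℂ U := by
  have hrow : ∀ j, |∑ i ∈ Icc 1 p, η j i *
      ((finrank ℂ ↥(U ⊓ F j (i - 1)) : ℝ) - finrank ℂ ↥(U ⊓ F j i))| ≤ ε * finrank ℂ U := by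
    intro j
    rw [← (hF j).sum_finrank_inf_sub (finrank_fin_fun ℂ) U, mul_sum]
    refine (abs_sum_le_sum_abs _ _).trans (sum_le_sum fun i hi => ?_)
    have hjump : (0 : ℝ) ≤ finrank ℂ ↥(U ⊓ F j (i - 1)) - finrank ℂ ↥(U ⊓ F j i) :=
      sub_nonneg.mpr (by exact_mod_cast (hF j).finrank_inf_le_pred U hi)
    rw [abs_mul, abs_of_nonneg hjump]
    exact mul_le_mul_of_nonneg_right (hη j i hi) hjump
  calc |inducedWeight p s η F U| ≤ ∑ _j : Fin s, ε * finrank ℂ U :=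
        (abs_sum_le_sum_abs _ _).trans (sum_le_sum fun j _ => hrow j)
    _ = ε * s * finrank ℂ U := by
      simp only [sum_const, card_univ, Fintype.card_fin, nsmul_eq_mul]
      ring

lemma abs_totalWeight_le (hη : ∀ j, ∀ i ∈ Icc 1 p, |η j i| ≤ ε) :
    |totalWeight p s η| ≤ ε * s * p :=
  calc |totalWeight p s η| ≤ ∑ _j : Fin s, ∑ _i ∈ Icc 1 p, ε :=
        (abs_sum_le_sum_abs _ _).trans <| sum_le_sum fun j _ =>
          (abs_sum_le_sum_abs _ _).trans <| sum_le_sum fun i hi => hη j i hi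
    _ = ε * s * p := by
      simp only [sum_const, Nat.card_Icc, add_tsub_cancel_right, nsmul_eq_mul, card_univ,
        Fintype.card_fin]
      ring

lemma abs_totalWeight_mul_finrank_div_le (hη : ∀ j, ∀ i ∈ Icc 1 p, |η j i| ≤ ε)
    (U : Submodule ℂ (Fin p → ℂ)) : |totalWeight p s η * finrank ℂ U / p| ≤ ε * s * p := by
  rw [mul_div_assoc, abs_mul, abs_of_nonneg (a := (finrank ℂ U : ℝ) / p) (by positivity)]
  exact (mul_le_of_le_one_right (abs_nonneg _)
    (div_le_one_of_le₀ U.finrank_fin_fun_le p.cast_nonneg)).trans (abs_totalWeight_le hη)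

noncomputable def weightCorrection (p q s : ℕ) (η ζ : Fin s → ℕ → ℝ)
    (F : Fin s → ℕ → Submodule ℂ (Fin p → ℂ)) (H : Fin s → ℕ → Submodule ℂ (Fin q → ℂ))
    (U : Submodule ℂ (Fin p → ℂ)) (V : Submodule ℂ (Fin q → ℂ)) : ℝ :=
  totalWeight p s η * finrank ℂ U / p - inducedWeight p s η F U
    + totalWeight q s ζ * finrank ℂ V / q - inducedWeight q s ζ H V

lemma muFeather_eq_add_weightCorrection (U : Submodule ℂ (Fin p → ℂ))
    (V : Submodule ℂ (Fin q → ℂ)) :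
    muFeather p q s η ζ F H U V =
      (((p * finrank ℂ V : ℕ) - (q * finrank ℂ U : ℕ) : ℤ) : ℝ)
        + weightCorrection p q s η ζ F H U V := by
  simp only [muFeather, weightCorrection]
  push_cast
  ring

lemma abs_weightCorrection_le (hε : 0 ≤ ε)
    (hη : ∀ j, ∀ i ∈ Icc 1 p, |η j i| ≤ ε) (hζ : ∀ j, ∀ i ∈ Icc 1 q, |ζ j i| ≤ ε)
    (hF : ∀ j, IsCompleteFlag p (F j)) (hH : ∀ j, IsCompleteFlag q (H j))
    (U : Submodule ℂ (Fin p → ℂ)) (V : Submodule ℂ (Fin q → ℂ)) :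
    |weightCorrection p q s η ζ F H U V| ≤ 2 * s * (p + q) * ε := by
  have hU := abs_totalWeight_mul_finrank_div_le hη U
  have hV := abs_totalWeight_mul_finrank_div_le hζ V
  have hIU := (abs_inducedWeight_le hη hF U).trans
    (mul_le_mul_of_nonneg_left (U.finrank_fin_fun_le) (by positivity))
  have hIV := (abs_inducedWeight_le hζ hH V).trans
    (mul_le_mul_of_nonneg_left (V.finrank_fin_fun_le) (by positivity))
  rw [weightCorrection, abs_le]
  rw [abs_le] at hU hV hIU hIV
  constructor <;> linarith [hU.1, hU.2, hV.1, hV.2, hIU.1, hIU.2, hIV.1, hIV.2]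

lemma weightCorrection_nonneg_iff (hp : 0 < p) (hq : 0 < q) {U : Submodule ℂ (Fin p → ℂ)}
    {V : Submodule ℂ (Fin q → ℂ)} (hUV : q * finrank ℂ U = p * finrank ℂ V) :
    0 ≤ weightCorrection p q s η ζ F H U V ↔
      q * (inducedWeight p s η F U + inducedWeight q s ζ H V)
        ≤ (totalWeight p s η + totalWeight q s ζ) * finrank ℂ V := by
  have hq' : (0 : ℝ) < q := by exact_mod_cast hq
  have hslope : (finrank ℂ U : ℝ) / p = finrank ℂ V / q := by
    rw [div_eq_div_iff (by positivity) hq'.ne']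
    exact_mod_cast (mul_comm _ _).trans (hUV.trans (mul_comm _ _))
  have hcorr : weightCorrection p q s η ζ F H U V =
      (totalWeight p s η + totalWeight q s ζ) * finrank ℂ V / q
        - (inducedWeight p s η F U + inducedWeight q s ζ H V) := by
    rw [weightCorrection, mul_div_assoc, hslope]
    ring
  rw [hcorr, sub_nonneg, le_div_iff₀ hq', mul_comm]

lemma muFeather_nonneg_iff (hp : 0 < p) (hq : 0 < q) (hε₀ : 0 ≤ ε)
    (hε : 2 * s * (p + q) * ε < 1)
    (hη : ∀ j, ∀ i ∈ Icc 1 p, |η j i| ≤ ε) (hζ : ∀ j, ∀ i ∈ Icc 1 q, |ζ j i| ≤ ε)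
    (hF : ∀ j, IsCompleteFlag p (F j)) (hH : ∀ j, IsCompleteFlag q (H j))
    (U : Submodule ℂ (Fin p → ℂ)) (V : Submodule ℂ (Fin q → ℂ)) :
    0 ≤ muFeather p q s η ζ F H U V ↔
      q * finrank ℂ U < p * finrank ℂ V ∨
        (q * finrank ℂ U = p * finrank ℂ V ∧
          q * (inducedWeight p s η F U + inducedWeight q s ζ H V)
            ≤ (totalWeight p s η + totalWeight q s ζ) * finrank ℂ V) := by
  have hsmall := (abs_weightCorrection_le hε₀ hη hζ hF hH U V).trans_lt hε
  rw [muFeather_eq_add_weightCorrection, Int.cast_add_nonneg_iff_of_abs_lt_one hsmall,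
    sub_pos, sub_eq_zero, Nat.cast_lt, Nat.cast_inj, eq_comm]
  exact or_congr Iff.rfl (and_congr_right (weightCorrection_nonneg_iff hp hq))

lemma muFeather_bot_bot : muFeather p q s η ζ F H ⊥ ⊥ = 0 := by
  simp [muFeather, inducedWeight_bot]

lemma muFeather_top_top (hp : 0 < p) (hq : 0 < q) (hF : ∀ j, IsCompleteFlag p (F j))
    (hH : ∀ j, IsCompleteFlag q (H j)) : muFeather p q s η ζ F H ⊤ ⊤ = 0 := by
  have hp' : (p : ℝ) ≠ 0 := by exact_mod_cast hp.ne'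
  have hq' : (q : ℝ) ≠ 0 := by exact_mod_cast hq.ne'
  rw [muFeather, inducedWeight_top hF, inducedWeight_top hH, finrank_top, finrank_top,
    finrank_fin_fun, finrank_fin_fun]
  field_simp
  ring

end Weights

theorem feather_semistable_iff_small_weights_general (p q r s : ℕ)
    (hp : 0 < p) (hq : 0 < q) :
    ∃ ε > (0 : ℝ),
      ∀ (η ζ : Fin s → ℕ → ℝ)
        (F : Fin s → ℕ → Submodule ℂ (Fin p → ℂ))
        (H : Fin s → ℕ → Submodule ℂ (Fin q → ℂ))
        (A : Fin r → ((Fin p → ℂ) →ₗ[ℂ] (Fin q → ℂ))),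
        (∀ j, ∀ i ∈ Finset.Icc 1 p, |η j i| < ε) →
        (∀ j, ∀ i ∈ Finset.Icc 1 q, |ζ j i| < ε) →
        (∀ j, ∀ i < p, F j (i + 1) ≤ F j i) →
        (∀ j, ∀ i ≤ p, Module.finrank ℂ ↥(F j i) = p - i) →
        (∀ j, ∀ i < q, H j (i + 1) ≤ H j i) →
        (∀ j, ∀ i ≤ q, Module.finrank ℂ ↥(H j i) = q - i) →
        ((∀ (U : Submodule ℂ (Fin p → ℂ)) (V : Submodule ℂ (Fin q → ℂ)),
            (∀ j, U.map (A j) ≤ V) → 0 ≤ muFeather p q s η ζ F H U V) ↔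
          (∀ (U : Submodule ℂ (Fin p → ℂ)) (V : Submodule ℂ (Fin q → ℂ)),
            (∀ j, U.map (A j) ≤ V) →
            ¬ ((U = ⊥ ∧ V = ⊥) ∨ (U = ⊤ ∧ V = ⊤)) →
            (q * Module.finrank ℂ U < p * Module.finrank ℂ V ∨
              (q * Module.finrank ℂ U = p * Module.finrank ℂ V ∧
                (q : ℝ) * (inducedWeight p s η F U + inducedWeight q s ζ H V)
                  ≤ (totalWeight p s η + totalWeight q s ζ) *
                      (Module.finrank ℂ ↥V : ℝ))))) := by
  refine ⟨1 / (2 * s * (p + q) + 1), by positivity, ?_⟩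
  intro η ζ F H A hη hζ hF hFr hH hHr
  have hε : 2 * s * (p + q) * (1 / (2 * s * (p + q) + 1) : ℝ) < 1 := by
    rw [mul_one_div, div_lt_one (by positivity)]
    exact lt_add_one _
  have hFc : ∀ j, IsCompleteFlag p (F j) := fun j => ⟨hF j, hFr j⟩
  have hHc : ∀ j, IsCompleteFlag q (H j) := fun j => ⟨hH j, hHr j⟩
  have hμ := muFeather_nonneg_iff hp hq (by positivity) hε (fun j i hi => (hη j i hi).le)
    (fun j i hi => (hζ j i hi).le) hFc hHc
  refine ⟨fun hss U V hUV _ => (hμ U V).1 (hss U V hUV), fun hcond U V hUV => ?_⟩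
  by_cases htriv : (U = ⊥ ∧ V = ⊥) ∨ (U = ⊤ ∧ V = ⊤)
  · rcases htriv with ⟨rfl, rfl⟩ | ⟨rfl, rfl⟩
    · exact muFeather_bot_bot.ge
    · exact (muFeather_top_top hp hq hFc hHc).ge
  · exact (hμ U V).2 (hcond U V hUV htriv)

/-- For small enough weights `(η, ζ)` (depending only on `p, q, r, s`),
a point `(A, F, H)` of the feathered Kronecker space is `(η, ζ)`-semistable if and only if
every nontrivial invariant pair of subspaces `(U, V)` satisfies either `p·dim V > q·dim U`,
or `p·dim V = q·dim U` together with
`q·(|η(U ∩ F)| + |ζ(V ∩ H)|) ≤ (‖η‖ + ‖ζ‖)·dim V`. -/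
theorem feather_semistable_iff_small_weights (p q r s : ℕ)
    (hp : 0 < p) (hq : 0 < q) (hr : 0 < r) (hs : 0 < s) :
    ∃ ε > (0 : ℝ),
      ∀ (η ζ : Fin s → ℕ → ℝ)
        (F : Fin s → ℕ → Submodule ℂ (Fin p → ℂ))
        (H : Fin s → ℕ → Submodule ℂ (Fin q → ℂ))
        (A : Fin r → ((Fin p → ℂ) →ₗ[ℂ] (Fin q → ℂ))),
        (∀ j, ∀ i ∈ Finset.Icc 1 p, |η j i| < ε) →
        (∀ j, ∀ i ∈ Finset.Icc 1 q, |ζ j i| < ε) →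
        (∀ j, ∀ i < p, F j (i + 1) ≤ F j i) →
        (∀ j, ∀ i ≤ p, Module.finrank ℂ ↥(F j i) = p - i) →
        (∀ j, ∀ i < q, H j (i + 1) ≤ H j i) →
        (∀ j, ∀ i ≤ q, Module.finrank ℂ ↥(H j i) = q - i) →
        ((∀ (U : Submodule ℂ (Fin p → ℂ)) (V : Submodule ℂ (Fin q → ℂ)),
            (∀ j, U.map (A j) ≤ V) → 0 ≤ muFeather p q s η ζ F H U V) ↔
          (∀ (U : Submodule ℂ (Fin p → ℂ)) (V : Submodule ℂ (Fin q → ℂ)),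
            (∀ j, U.map (A j) ≤ V) →
            ¬ ((U = ⊥ ∧ V = ⊥) ∨ (U = ⊤ ∧ V = ⊤)) →
            (q * Module.finrank ℂ U < p * Module.finrank ℂ V ∨
              (q * Module.finrank ℂ U = p * Module.finrank ℂ V ∧
                (q : ℝ) * (inducedWeight p s η F U + inducedWeight q s ζ H V)
                  ≤ (totalWeight p s η + totalWeight q s ζ) *
                      (Module.finrank ℂ ↥V : ℝ))))) :=
  feather_semistable_iff_small_weights_general p q r s hp hq
end
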